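/- arXiv:0809.3274 — 8 statements merged into one kernel-verified Lean document; each statement's English description precedes it below -/
import Mathlib

section
/- A set Λ ⊆ ℝ is a spectrum for the unit interval [0,1) (i.e., {e^{2πiλx} : λ ∈ Λ} is an orthonormal basis of L²[0,1)) if and only if Λ is a tiling set for [0,1), i.e., the translates [0,1)+λ, λ ∈ Λ, partition ℝ up to measure zero. -/
open MeasureTheory Complex

/-!
Both conditions on `Λ` mean `Λ = a + ℤ` for some `a`.

Since `∫₀¹ e^{2πicx} dx` vanishes exactly for `c ∈ ℤ ∖ {0}`, orthogonality says `Λ - Λ ⊆ ℤ`.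
Completeness then forces `a + n ∈ Λ` for all `n`, as otherwise `e_{a+n}` would be orthogonal
to all of `Λ`; conversely `a + ℤ` is complete by Parseval's identity for the Fourier basis,
applied to `f · e_{-a}`.

If almost every point has a unique tile, distinct points of `Λ` are at distance at least `1`,
and this upgrades the almost everywhere existence of a tile to existence at every point.
The tile at `b ± 1` of some `b ∈ Λ` must then be `b ± 1` itself.
-/

theorem ae_eq_zero_of_fourierCoeffOn_eq_zero {a b : ℝ} {f : ℝ → ℂ} (hab : a < b)
    (hf : MemLp f 2 (volume.restrict (Set.Ioc a b))) (h : ∀ n, fourierCoeffOn hab f n = 0) :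
    f =ᵐ[volume.restrict (Set.Ioc a b)] 0 := by
  have parseval := hasSum_sq_fourierCoeffOn hab hf
  simp only [h, norm_zero, ne_eq, OfNat.ofNat_ne_zero, not_false_eq_true, zero_pow] at parseval
  have hnorm : ∫ x in Set.Ioc a b, ‖f x‖ ^ 2 = 0 := by
    rw [← intervalIntegral.integral_of_le hab.le]
    simpa [(sub_pos.2 hab).ne'] using (hasSum_zero.unique parseval).symm
  rw [integral_eq_zero_iff_of_nonneg (fun x => by positivity)
    (hf.integrable_norm_pow two_ne_zero)] at hnorm
  filter_upwards [hnorm] with x hx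
  simpa using hx

theorem fourierCoeffOn_zero_one_eq_integral_Ico (g : ℝ → ℂ) (n : ℤ) :
    fourierCoeffOn zero_lt_one g n =
      ∫ x in Set.Ico (0:ℝ) 1, g x * exp (-(2 * Real.pi * I * n * x)) := by
  rw [fourierCoeffOn_eq_integral, intervalIntegral.integral_of_le zero_le_one,
    ← restrict_Ico_eq_restrict_Ioc]
  simp only [sub_zero, div_one, one_smul]
  refine integral_congr_ae (Filter.Eventually.of_forall fun x => ?_)
  simp only [fourier_coe_apply, smul_eq_mul, mul_comm (g x)]
  congr 2
  push_cast
  ring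

theorem integral_exp_Ico_eq_zero_iff (c : ℝ) :
    ∫ x in Set.Ico (0:ℝ) 1, exp (2 * Real.pi * I * c * x) = 0 ↔ ∃ n : ℤ, n ≠ 0 ∧ c = n := by
  rw [restrict_Ico_eq_restrict_Ioc, ← intervalIntegral.integral_of_le zero_le_one]
  rcases eq_or_ne c 0 with rfl | hc
  · simp [eq_comm]
  have hc' : (2 * Real.pi * I * c : ℂ) ≠ 0 := by simp [Real.pi_ne_zero, I_ne_zero, hc]
  rw [integral_exp_mul_complex hc', div_eq_zero_iff, or_iff_left hc', sub_eq_zero]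
  simp only [ofReal_one, mul_one, ofReal_zero, mul_zero, exp_zero, exp_eq_one_iff]
  constructor
  · rintro ⟨n, hn⟩
    have hcn : c = n := by
      have : (c : ℂ) = n := mul_left_cancel₀ (by simp [Real.pi_ne_zero, I_ne_zero] :
        (2 * Real.pi * I : ℂ) ≠ 0) (by linear_combination hn)
      exact_mod_cast this
    exact ⟨n, by rintro rfl; simp_all, hcn⟩
  · rintro ⟨n, -, rfl⟩
    exact ⟨n, by push_cast; ring⟩

def IsExpOrthogonal (Λ : Set ℝ) : Prop :=
  ∀ lam ∈ Λ, ∀ lam' ∈ Λ, lam ≠ lam' →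
    ∫ x in Set.Ico (0:ℝ) 1, exp (2 * Real.pi * I * (lam - lam') * x) = 0

def IsExpComplete (Λ : Set ℝ) : Prop :=
  ∀ f : ℝ → ℂ, MemLp f 2 (volume.restrict (Set.Ico (0:ℝ) 1)) →
    (∀ lam ∈ Λ, ∫ x in Set.Ico (0:ℝ) 1, f x * exp (-(2 * Real.pi * I * lam * x)) = 0) →
    f =ᵐ[volume.restrict (Set.Ico (0:ℝ) 1)] 0

theorem isExpOrthogonal_iff {Λ : Set ℝ} :
    IsExpOrthogonal Λ ↔ ∀ lam ∈ Λ, ∀ lam' ∈ Λ, ∃ n : ℤ, lam - lam' = n := by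
  refine forall₂_congr fun lam _ => forall₂_congr fun lam' _ => ?_
  rw [← ofReal_sub, integral_exp_Ico_eq_zero_iff, sub_ne_zero.symm]
  constructor
  · intro h
    rcases eq_or_ne (lam - lam') 0 with h0 | h0
    · exact ⟨0, by simpa using h0⟩
    · obtain ⟨n, -, hn⟩ := h h0
      exact ⟨n, hn⟩
  · rintro ⟨n, hn⟩ h0
    exact ⟨n, by rintro rfl; simp_all, hn⟩

theorem memLp_exp_mul_I (c : ℝ) (μ : Measure ℝ) [IsFiniteMeasure μ] :
    MemLp (fun x : ℝ => exp (2 * Real.pi * I * c * x)) 2 μ :=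
  MemLp.of_bound (by fun_prop) 1 (Filter.Eventually.of_forall fun x => by simp [norm_exp])

theorem IsExpComplete.exists_integral_exp_sub_ne_zero {Λ : Set ℝ} (hΛ : IsExpComplete Λ)
    (c : ℝ) :
    ∃ lam ∈ Λ, ∫ x in Set.Ico (0:ℝ) 1, exp (2 * Real.pi * I * (c - lam) * x) ≠ 0 := by
  by_contra! h
  have hzero := hΛ _ (memLp_exp_mul_I c _) fun lam hlam => by
    rw [← h lam hlam]
    congr 1 with x
    rw [← exp_add]
    ring_nf
  have : (ae (volume.restrict (Set.Ico (0:ℝ) 1))).NeBot := ae_neBot.2 (by simp)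
  obtain ⟨x, hx⟩ := hzero.exists
  exact exp_ne_zero _ hx

theorem isExpComplete_range_add_int (a : ℝ) :
    IsExpComplete (Set.range fun n : ℤ => a + n) := by
  intro f hf hcoeff
  set g : ℝ → ℂ := fun x => f x * exp (-(2 * Real.pi * I * a * x))
  have hg : MemLp g 2 (volume.restrict (Set.Ioc (0:ℝ) 1)) := by
    rw [← restrict_Ico_eq_restrict_Ioc]
    exact hf.of_le (hf.aestronglyMeasurable.mul (by fun_prop))
      (Filter.Eventually.of_forall fun x => by simp [g, norm_exp])
  have hg0 := ae_eq_zero_of_fourierCoeffOn_eq_zero zero_lt_one hg fun n => by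
    rw [fourierCoeffOn_zero_one_eq_integral_Ico, ← hcoeff _ ⟨n, rfl⟩]
    congr 1 with x
    rw [mul_assoc, ← exp_add]
    push_cast
    ring_nf
  rw [← restrict_Ico_eq_restrict_Ioc] at hg0
  filter_upwards [hg0] with x hx
  exact (mul_eq_zero.mp hx).resolve_right (exp_ne_zero _)

theorem isExpOrthogonal_and_isExpComplete_iff {Λ : Set ℝ} :
    IsExpOrthogonal Λ ∧ IsExpComplete Λ ↔ ∃ a : ℝ, Λ = Set.range fun n : ℤ => a + n := by
  constructor
  · rintro ⟨horth, hcomp⟩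
    rw [isExpOrthogonal_iff] at horth
    obtain ⟨a, ha, -⟩ := hcomp.exists_integral_exp_sub_ne_zero 0
    refine ⟨a, Set.Subset.antisymm (fun lam hlam => ?_) ?_⟩
    · obtain ⟨n, hn⟩ := horth lam hlam a ha
      exact ⟨n, by linarith⟩
    · rintro _ ⟨n, rfl⟩
      obtain ⟨lam, hlam, hne⟩ := hcomp.exists_integral_exp_sub_ne_zero (a + n)
      obtain ⟨m, hm⟩ := horth lam hlam a ha
      have hnm : n - m = 0 := by
        by_contra h
        rw [← ofReal_sub, ne_eq, integral_exp_Ico_eq_zero_iff] at hne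
        exact hne ⟨n - m, h, by push_cast; linarith⟩
      have : (n : ℝ) = m := by exact_mod_cast sub_eq_zero.1 hnm
      convert hlam using 1
      linarith
  · rintro ⟨a, rfl⟩
    refine ⟨isExpOrthogonal_iff.2 ?_, isExpComplete_range_add_int a⟩
    rintro _ ⟨m, rfl⟩ _ ⟨n, rfl⟩
    exact ⟨m - n, by push_cast; ring⟩

def IsTilingSet (Λ : Set ℝ) : Prop :=
  ∀ᵐ x : ℝ, ∃! lam, lam ∈ Λ ∧ x - lam ∈ Set.Ico (0:ℝ) 1

theorem exists_mem_Ioo_of_ae {p : ℝ → Prop} (h : ∀ᵐ x, p x) {u v : ℝ} (huv : u < v) :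
    ∃ x ∈ Set.Ioo u v, p x :=
  Measure.exists_mem_of_measure_ne_zero_of_ae (by simp [huv])
    (h.filter_mono (ae_mono Measure.restrict_le_self))

namespace IsTilingSet

variable {Λ : Set ℝ}

theorem add_one_le (hΛ : IsTilingSet Λ) {l m : ℝ} (hl : l ∈ Λ) (hm : m ∈ Λ) (hlm : l < m) :
    l + 1 ≤ m := by
  by_contra! h
  obtain ⟨x, ⟨hmx, hxl⟩, hx⟩ := exists_mem_Ioo_of_ae hΛ h
  refine hlm.ne (hx.unique ⟨hl, ?_, ?_⟩ ⟨hm, ?_, ?_⟩) <;> linarith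

theorem exists_mem_le_lt_add_one (hΛ : IsTilingSet Λ) (x : ℝ) : ∃ l ∈ Λ, l ≤ x ∧ x < l + 1 := by
  -- Without a tile at `x`, every `y ∈ (x, x + 1)` has its tile in `(x, y]`; two such tiles
  -- would be closer than `1`.
  by_contra! hx
  have above {y l : ℝ} (hxy : x < y) (hl : l ∈ Λ) (hly : y - l ∈ Set.Ico (0:ℝ) 1) : x < l := by
    by_contra! hlx
    exact (hx l hl hlx).not_gt (by linarith [hly.2])
  obtain ⟨y₁, ⟨hxy₁, hy₁⟩, l₁, ⟨hl₁, hly₁⟩, -⟩ := exists_mem_Ioo_of_ae hΛ (lt_add_one x)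
  have hxl₁ := above hxy₁ hl₁ hly₁
  obtain ⟨y₂, ⟨hxy₂, hy₂⟩, l₂, ⟨hl₂, hly₂⟩, -⟩ := exists_mem_Ioo_of_ae hΛ hxl₁
  have hxl₂ := above hxy₂ hl₂ hly₂
  have := hΛ.add_one_le hl₂ hl₁ (by linarith [hly₂.1])
  linarith [hly₁.1]

theorem add_one_mem (hΛ : IsTilingSet Λ) {b : ℝ} (hb : b ∈ Λ) : b + 1 ∈ Λ := by
  obtain ⟨l, hl, hlb, hbl⟩ := hΛ.exists_mem_le_lt_add_one (b + 1)
  have := hΛ.add_one_le hb hl (by linarith)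
  rwa [show b + 1 = l by linarith]

theorem sub_one_mem (hΛ : IsTilingSet Λ) {b : ℝ} (hb : b ∈ Λ) : b - 1 ∈ Λ := by
  obtain ⟨l, hl, hlb, hbl⟩ := hΛ.exists_mem_le_lt_add_one (b - 1)
  rcases (show l + 1 ≤ b by linarith).lt_or_eq with hlt | heq
  · linarith [hΛ.add_one_le (hΛ.add_one_mem hl) hb hlt]
  · rwa [show b - 1 = l by linarith]

theorem add_int_mem (hΛ : IsTilingSet Λ) {b : ℝ} (hb : b ∈ Λ) (n : ℤ) : b + n ∈ Λ := by
  induction n using Int.induction_on with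
  | zero => simpa using hb
  | succ k ih => simpa [add_assoc] using hΛ.add_one_mem ih
  | pred k ih => simpa [sub_eq_add_neg, add_assoc] using hΛ.sub_one_mem ih

end IsTilingSet

theorem isTilingSet_iff {Λ : Set ℝ} :
    IsTilingSet Λ ↔ ∃ a : ℝ, Λ = Set.range fun n : ℤ => a + n := by
  constructor
  · intro hΛ
    obtain ⟨a, ha, -⟩ := hΛ.exists_mem_le_lt_add_one 0
    refine ⟨a, Set.Subset.antisymm (fun l hl => ⟨⌊l - a⌋, ?_⟩) ?_⟩
    · have hfl := Int.floor_le (l - a)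
      by_contra hne
      have := hΛ.add_one_le (hΛ.add_int_mem ha ⌊l - a⌋) hl (lt_of_le_of_ne (by linarith) hne)
      linarith [Int.lt_floor_add_one (l - a)]
    · rintro _ ⟨n, rfl⟩
      exact hΛ.add_int_mem ha n
  · rintro ⟨a, rfl⟩
    refine Filter.Eventually.of_forall fun x => ⟨a + ⌊x - a⌋, ⟨⟨_, rfl⟩, ?_, ?_⟩, ?_⟩
    · linarith [Int.floor_le (x - a)]
    · linarith [Int.lt_floor_add_one (x - a)]
    · rintro _ ⟨⟨m, rfl⟩, h0, h1⟩
      rw [Int.floor_eq_iff.2 ⟨by linarith, by linarith⟩]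

/-- `Λ ⊆ ℝ` is a spectrum for `[0,1)` iff `Λ` is a tiling set for `[0,1)`. -/
theorem spectrum_iff_tiling_unit_interval (Λ : Set ℝ) :
    ((∀ lam ∈ Λ, ∀ lam' ∈ Λ, lam ≠ lam' →
        ∫ x in Set.Ico (0:ℝ) 1, Complex.exp (2 * Real.pi * I * (lam - lam') * x) = 0) ∧
      (∀ f : ℝ → ℂ, MemLp f 2 (volume.restrict (Set.Ico (0:ℝ) 1)) →
        (∀ lam ∈ Λ,
          ∫ x in Set.Ico (0:ℝ) 1, f x * Complex.exp (-(2 * Real.pi * I * lam * x)) = 0) →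
        f =ᵐ[volume.restrict (Set.Ico (0:ℝ) 1)] 0)) ↔
    (∀ᵐ x : ℝ, ∃! lam, lam ∈ Λ ∧ x - lam ∈ Set.Ico (0:ℝ) 1) :=
  isExpOrthogonal_and_isExpComplete_iff.trans isTilingSet_iff.symm
end

section
/- Let μ be the invariant measure of the IFS τ₀(x) = x/4, τ₂(x) = (x+2)/4 on ℝ with equal weights 1/2 (the Jorgensen–Pedersen quarter Cantor measure), i.e., ∫f dμ = ½∫f(x/4)dμ(x) + ½∫f((x+2)/4)dμ(x) for all continuous f. Then for the set Λ = {∑_{k=0}^{n} 4^k a_k : n ∈ ℕ, a_k ∈ {0,1}}, the exponentials e_λ(x) = exp(2πiλx), λ ∈ Λ, are pairwise orthogonal in L²(μ). -/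
/-!
Write `μ̂ t = ∫ exp (2πitx) dμ`. Self-similarity gives `μ̂ t = m t * μ̂ (t / 4)` with
`m t = (1 + exp (πit)) / 2`, and `m` vanishes at the odd integers, so `μ̂` vanishes on
`4 ^ m * j` for every odd `j`. A nonzero difference of two elements of `Λ` has base-4 digits in
`{-1, 0, 1}`, hence is of that form: its lowest nonzero digit is odd and all higher terms are even.
-/

open MeasureTheory Complex Finset

theorem exp_pi_mul_I_mul_of_odd {j : ℤ} (hj : Odd j) : exp (Real.pi * I * j) = -1 := by
  rw [mul_comm, exp_int_mul, exp_pi_mul_I, hj.neg_one_zpow]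

theorem sum_range_eq_sum_range_ite {M : Type*} [AddCommMonoid M] (f : ℕ → M) {n N : ℕ}
    (h : n ≤ N) : ∑ k ∈ range n, f k = ∑ k ∈ range N, if k < n then f k else 0 := by
  rw [← sum_filter]
  congr 1
  ext k
  simp only [mem_range, mem_filter]
  omega

theorem exists_pow_mul_odd_of_sum_ne_zero {b : ℤ} (hb : Even b) (d : ℕ → ℤ)
    (hd : ∀ k, d k = 0 ∨ Odd (d k)) (N : ℕ) (hne : ∑ k ∈ range N, b ^ k * d k ≠ 0) :
    ∃ (m : ℕ) (j : ℤ), Odd j ∧ ∑ k ∈ range N, b ^ k * d k = b ^ m * j := by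
  induction N generalizing d with
  | zero => simp at hne
  | succ N ih =>
    have hsplit : ∑ k ∈ range (N + 1), b ^ k * d k
        = d 0 + b * ∑ k ∈ range N, b ^ k * d (k + 1) := by
      rw [sum_range_succ', mul_sum]
      simp only [pow_succ', pow_zero, one_mul, mul_assoc, add_comm]
    rcases hd 0 with h0 | h0
    · rw [hsplit, h0, zero_add] at hne ⊢
      obtain ⟨m, j, hj, hsum⟩ :=
        ih (fun k => d (k + 1)) (fun k => hd (k + 1)) (right_ne_zero_of_mul hne)
      exact ⟨m + 1, j, hj, by rw [hsum, pow_succ']; ring⟩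
    · refine ⟨0, _, ?_, by rw [pow_zero, one_mul]⟩
      rw [hsplit]
      exact h0.add_even (hb.mul_right _)

theorem integral_exp_eq_mul_integral_exp_div_four {μ : Measure ℝ}
    (hμ : ∀ f : ℝ → ℂ, Continuous f →
      ∫ x, f x ∂μ = (1/2) * ∫ x, f (x / 4) ∂μ + (1/2) * ∫ x, f ((x + 2) / 4) ∂μ)
    (t : ℝ) :
    ∫ x, exp (2 * Real.pi * I * t * x) ∂μ
      = (1 + exp (Real.pi * I * t)) / 2 * ∫ x, exp (2 * Real.pi * I * (t / 4 : ℝ) * x) ∂μ := by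
  have hμt := hμ (fun x : ℝ => exp (2 * Real.pi * I * t * x)) (by fun_prop)
  have hleft (x : ℝ) : exp (2 * Real.pi * I * t * (x / 4 : ℝ))
      = exp (2 * Real.pi * I * (t / 4 : ℝ) * x) := by
    push_cast; ring_nf
  have hright (x : ℝ) : exp (2 * Real.pi * I * t * ((x + 2) / 4 : ℝ))
      = exp (Real.pi * I * t) * exp (2 * Real.pi * I * (t / 4 : ℝ) * x) := by
    rw [← exp_add]; push_cast; ring_nf
  simp only [hright, integral_const_mul] at hμt
  simp only [hleft] at hμt
  rw [hμt]
  ring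

theorem apply_pow_four_mul_odd_eq_zero {F : ℝ → ℂ}
    (hF : ∀ t, F t = (1 + exp (Real.pi * I * t)) / 2 * F (t / 4)) (m : ℕ) {j : ℤ}
    (hj : Odd j) : F (4 ^ m * j) = 0 := by
  induction m with
  | zero =>
    rw [hF]
    push_cast
    rw [pow_zero, one_mul, exp_pi_mul_I_mul_of_odd hj]
    ring
  | succ m ih =>
    have hquarter : (4 : ℝ) ^ (m + 1) * j / 4 = 4 ^ m * j := by ring
    rw [hF, hquarter, ih, mul_zero]

theorem exists_sub_eq_pow_four_mul_odd (a b : ℕ → ℕ) (ha : ∀ k, a k ≤ 1) (hb : ∀ k, b k ≤ 1)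
    (n n' : ℕ) (hne : ∑ k ∈ range n, (4 : ℝ) ^ k * a k ≠ ∑ k ∈ range n', (4 : ℝ) ^ k * b k) :
    ∃ (m : ℕ) (j : ℤ), Odd j ∧
      ∑ k ∈ range n, (4 : ℝ) ^ k * a k - ∑ k ∈ range n', (4 : ℝ) ^ k * b k = 4 ^ m * j := by
  set d : ℕ → ℤ := fun k => (if k < n then a k else 0 : ℤ) - (if k < n' then b k else 0)
  have hdiff : ∑ k ∈ range n, (4 : ℝ) ^ k * a k - ∑ k ∈ range n', (4 : ℝ) ^ k * b k
      = ((∑ k ∈ range (n + n'), 4 ^ k * d k : ℤ) : ℝ) := by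
    rw [sum_range_eq_sum_range_ite _ (n.le_add_right n'),
      sum_range_eq_sum_range_ite _ (n'.le_add_left n), ← sum_sub_distrib]
    push_cast [d]
    refine sum_congr rfl fun k _ => ?_
    split_ifs <;> ring
  have hd (k : ℕ) : d k = 0 ∨ Odd (d k) := by
    have : d k = -1 ∨ d k = 0 ∨ d k = 1 := by
      have := ha k; have := hb k
      simp only [d]; split_ifs <;> omega
    rcases this with h | h | h <;> simp [h]
  rw [← sub_ne_zero, hdiff, Int.cast_ne_zero] at hne
  obtain ⟨m, j, hj, hsum⟩ := exists_pow_mul_odd_of_sum_ne_zero (by decide) d hd _ hne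
  exact ⟨m, j, hj, by rw [hdiff, hsum]; push_cast; rfl⟩

theorem jorgensen_pedersen_orthogonality_general
    (μ : Measure ℝ)
    (hμ : ∀ f : ℝ → ℂ, Continuous f →
      ∫ x, f x ∂μ = (1/2) * ∫ x, f (x / 4) ∂μ + (1/2) * ∫ x, f ((x + 2) / 4) ∂μ)
    (Λ : Set ℝ)
    (hΛ : Λ = {t : ℝ | ∃ (n : ℕ) (a : ℕ → ℕ), (∀ k, a k ≤ 1) ∧
      t = ∑ k ∈ Finset.range (n + 1), (4 : ℝ) ^ k * a k}) :
    ∀ lam ∈ Λ, ∀ lam' ∈ Λ, lam ≠ lam' →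
      ∫ x, Complex.exp (2 * Real.pi * I * (lam - lam') * x) ∂μ = 0 := by
  subst hΛ
  rintro _ ⟨n, a, ha, rfl⟩ _ ⟨n', b, hb, rfl⟩ hne
  obtain ⟨m, j, hj, hdiff⟩ := exists_sub_eq_pow_four_mul_odd a b ha hb _ _ hne
  have hvanish := apply_pow_four_mul_odd_eq_zero
    (integral_exp_eq_mul_integral_exp_div_four hμ) m hj
  simpa only [← hdiff, ofReal_sub] using hvanish

/-- Jorgensen–Pedersen: for the quarter Cantor measure (IFS `x/4`, `(x+2)/4`, equal
weights), the exponentials with frequencies `∑ 4^k a_k`, `a_k ∈ {0,1}`, are pairwise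
orthogonal in `L²(μ)`. -/
theorem jorgensen_pedersen_orthogonality
    (μ : Measure ℝ) [IsProbabilityMeasure μ]
    (hμ : ∀ f : ℝ → ℂ, Continuous f →
      ∫ x, f x ∂μ = (1/2) * ∫ x, f (x / 4) ∂μ + (1/2) * ∫ x, f ((x + 2) / 4) ∂μ)
    (Λ : Set ℝ)
    (hΛ : Λ = {t : ℝ | ∃ (n : ℕ) (a : ℕ → ℕ), (∀ k, a k ≤ 1) ∧
      t = ∑ k ∈ Finset.range (n + 1), (4 : ℝ) ^ k * a k}) :
    ∀ lam ∈ Λ, ∀ lam' ∈ Λ, lam ≠ lam' →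
      ∫ x, Complex.exp (2 * Real.pi * I * (lam - lam') * x) ∂μ = 0 :=
  jorgensen_pedersen_orthogonality_general μ hμ Λ hΛ
end

section
/- Let μ₃ be the standard middle-third Cantor measure, i.e., the unique Borel probability measure on ℝ with ∫f dμ₃ = ½∫f(x/3)dμ₃ + ½∫f((x+2)/3)dμ₃. Then any set of exponentials {e^{2πiλx} : λ ∈ Λ} that is pairwise orthogonal in L²(μ₃) has at most 3 elements (equivalently, there do not exist 4 real numbers λ₁,λ₂,λ₃,λ₄ with e_{λ_i} pairwise orthogonal in L²(μ₃)). In particular, μ₃ is not a spectral measure. -/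
/-!
Self-similarity gives the product formula `μ̂(t) = e^{it/3} cos(t/3) μ̂(t/3)`, and `μ̂(t/3ⁿ) → μ̂(0) = 1`.
Hence a zero `t` of `μ̂` forces `cos(t/3ᵏ) = 0` for some `k ≥ 1`, i.e. `2t` is an odd multiple of `π`;
for frequencies this says `4(λ - λ')` is an odd integer. Three pairwise orthogonal exponentials
`λ₀, λ₁, λ₂` would give odd integers with `m₀₁ + m₁₂ = m₀₂`, which parity forbids.
-/

open MeasureTheory Complex Filter Topology

def IsMiddleThirdInvariant (μ : Measure ℝ) : Prop :=
  ∀ f : ℝ → ℂ, Continuous f →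
    ∫ x, f x ∂μ = (1/2) * ∫ x, f (x / 3) ∂μ + (1/2) * ∫ x, f ((x + 2) / 3) ∂μ

lemma exp_mul_I_mul_cos (θ : ℝ) :
    exp (θ * I) * (Real.cos θ : ℂ) = (1 + exp (2 * θ * I)) / 2 := by
  have hinv : exp (θ * I) * exp (-θ * I) = 1 := by rw [← exp_add]; simp
  rw [ofReal_cos, ← mul_div_cancel_left₀ (cos (θ : ℂ)) (two_ne_zero' ℂ), two_cos,
    show 2 * (θ : ℂ) * I = θ * I + θ * I by ring, exp_add]
  linear_combination hinv / 2

lemma eventually_charFun_div_three_pow_ne_zero (μ : Measure ℝ) [IsProbabilityMeasure μ]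
    (t : ℝ) : ∀ᶠ n : ℕ in atTop, charFun μ (t / 3 ^ n) ≠ 0 := by
  have hlim : Tendsto (fun n : ℕ => t / 3 ^ n) atTop (𝓝 0) :=
    tendsto_const_nhds.div_atTop (tendsto_pow_atTop_atTop_of_one_lt (by norm_num))
  have hne : charFun μ 0 ≠ 0 := by simp
  exact hlim.eventually ((continuous_charFun.tendsto 0).eventually_ne hne)

namespace IsMiddleThirdInvariant

variable {μ : Measure ℝ}

lemma charFun_eq_exp_mul_cos_mul_charFun_div_three (hμ : IsMiddleThirdInvariant μ) (t : ℝ) :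
    charFun μ t = exp ((t / 3 : ℝ) * I) * Real.cos (t / 3) * charFun μ (t / 3) := by
  have hshift (x : ℝ) : exp (t * ((x + 2) / 3 : ℝ) * I)
      = exp (2 * (t / 3 : ℝ) * I) * exp ((t / 3 : ℝ) * x * I) := by
    rw [← exp_add]; push_cast; ring_nf
  have hscale (x : ℝ) : exp (t * (x / 3 : ℝ) * I) = exp ((t / 3 : ℝ) * x * I) := by
    push_cast; ring_nf
  rw [exp_mul_I_mul_cos, charFun_apply_real, charFun_apply_real, hμ _ (by fun_prop)]
  simp only [hshift, hscale, integral_const_mul]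
  ring

lemma exists_cos_eq_zero_of_charFun_eq_zero (hμ : IsMiddleThirdInvariant μ) {n : ℕ} {t : ℝ}
    (hn : charFun μ (t / 3 ^ n) ≠ 0) (ht : charFun μ t = 0) :
    ∃ k : ℕ, Real.cos (t / 3 ^ (k + 1)) = 0 := by
  induction n generalizing t with
  | zero => simp_all
  | succ n ih =>
    rw [hμ.charFun_eq_exp_mul_cos_mul_charFun_div_three, mul_eq_zero, mul_eq_zero,
      ofReal_eq_zero] at ht
    rcases ht with (hexp | hcos) | hnext
    · exact absurd hexp (exp_ne_zero _)
    · exact ⟨0, by simpa using hcos⟩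
    · obtain ⟨k, hk⟩ := ih (by rwa [div_div, ← pow_succ']) hnext
      exact ⟨k + 1, by rwa [div_div, ← pow_succ'] at hk⟩

lemma exists_odd_two_mul_eq_of_charFun_eq_zero [IsProbabilityMeasure μ]
    (hμ : IsMiddleThirdInvariant μ) {t : ℝ} (ht : charFun μ t = 0) :
    ∃ m : ℤ, Odd m ∧ 2 * t = m * Real.pi := by
  obtain ⟨n, hn⟩ := (eventually_charFun_div_three_pow_ne_zero μ t).exists
  obtain ⟨k, hk⟩ := hμ.exists_cos_eq_zero_of_charFun_eq_zero hn ht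
  obtain ⟨j, hj⟩ := Real.cos_eq_zero_iff.mp hk
  refine ⟨3 ^ (k + 1) * (2 * j + 1), (Odd.pow (by decide)).mul (odd_two_mul_add_one j), ?_⟩
  rw [div_eq_iff (by positivity)] at hj
  rw [hj]; push_cast; ring

lemma exists_odd_four_mul_eq_of_integral_exp_eq_zero [IsProbabilityMeasure μ]
    (hμ : IsMiddleThirdInvariant μ) {a : ℝ}
    (ha : ∫ x, exp (2 * Real.pi * I * a * x) ∂μ = 0) : ∃ m : ℤ, Odd m ∧ 4 * a = m := by
  have hchar : charFun μ (2 * Real.pi * a) = 0 := by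
    rw [charFun_apply_real, ← ha]
    congr 1 with x
    push_cast; ring_nf
  obtain ⟨m, hm, h⟩ := hμ.exists_odd_two_mul_eq_of_charFun_eq_zero hchar
  exact ⟨m, hm, mul_right_cancel₀ Real.pi_ne_zero (by linear_combination h)⟩

end IsMiddleThirdInvariant

/-- Jorgensen–Pedersen: the middle-third Cantor measure admits no 4 pairwise orthogonal
exponentials; in particular it is not a spectral measure. -/
theorem cantor_measure_no_four_orthogonal_exponentials
    (μ : Measure ℝ) [IsProbabilityMeasure μ]
    (hμ : ∀ f : ℝ → ℂ, Continuous f →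
      ∫ x, f x ∂μ = (1/2) * ∫ x, f (x / 3) ∂μ + (1/2) * ∫ x, f ((x + 2) / 3) ∂μ) :
    ¬ ∃ lam : Fin 4 → ℝ, Function.Injective lam ∧
      ∀ i j : Fin 4, i ≠ j →
        ∫ x, Complex.exp (2 * Real.pi * I * (lam i - lam j) * x) ∂μ = 0 := by
  rintro ⟨lam, -, horth⟩
  have hodd (i j : Fin 4) (hij : i ≠ j) : ∃ m : ℤ, Odd m ∧ 4 * (lam i - lam j) = m := by
    have h := horth i j hij
    rw [← ofReal_sub] at h
    exact IsMiddleThirdInvariant.exists_odd_four_mul_eq_of_integral_exp_eq_zero hμ h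
  obtain ⟨m₁, hm₁, h₁⟩ := hodd 0 1 (by decide)
  obtain ⟨m₂, hm₂, h₂⟩ := hodd 1 2 (by decide)
  obtain ⟨m₃, hm₃, h₃⟩ := hodd 0 2 (by decide)
  have hsum : m₃ = m₁ + m₂ := by
    exact_mod_cast (by linear_combination h₁ + h₂ - h₃ : (m₃ : ℝ) = m₁ + m₂)
  exact Int.not_even_iff_odd.mpr hm₃ (hsum ▸ hm₁.add_odd hm₂)
end

section
/- Let A ⊆ ℤ be finite and suppose A ⊕ B = ℤ is a tiling of ℤ by translations (every integer has a unique representation a + b with a ∈ A, b ∈ B). Then the tiling is periodic: there exist M ∈ ℕ, M ≥ 1, and a finite set C ⊆ ℤ with B = C ⊕ Mℤ and #A · #C = M. -/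
/-!
A complement `B` of a finite set `A ⊆ ℤ` is determined, one point at a time, by its
intersection with any interval of length `D = max A - min A`: whether `y ∈ B` is decided by which
`x` with `y - D ≤ x < y` lie in `B` (look at how `y + min A` is covered), and symmetrically from
the right (look at `y + max A`). There are only finitely many patterns on such an interval, so
the windows starting at some `k₁ ≠ k₂` carry the same pattern; then `B` and `B - (k₂ - k₁)` are
complements of `A` agreeing on an interval, hence equal, and `B` is periodic. If `M` is a period
and `C = B ∩ [0, M)`, then `(a, c) ↦ a + c mod M` is a bijection `A × C → ℤ/Mℤ`.
-/

open Function Set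

theorem Function.Periodic.apply_emod {α : Type*} {f : ℤ → α} {c : ℤ} (h : Periodic f c) (x : ℤ) :
    f (x % c) = f x := by
  rw [Int.emod_def, mul_comm]
  exact h.sub_int_mul_eq _

theorem Function.Periodic.natAbs {α : Type*} {f : ℤ → α} {c : ℤ} (h : Periodic f c) :
    Periodic f (c.natAbs : ℤ) := by
  rw [Int.natCast_natAbs]
  rcases abs_choice c with hc | hc <;> rw [hc]
  exacts [h, h.neg]

theorem Function.Periodic.eq_setOf_exists_add_mul {B : Set ℤ} [DecidablePred (· ∈ B)] {M : ℕ}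
    (hM : 0 < M) (hper : Periodic (· ∈ B) (M : ℤ)) :
    B = {x : ℤ | ∃ c ∈ {c ∈ Finset.Ico 0 (M : ℤ) | c ∈ B}, ∃ k : ℤ, x = c + M * k} := by
  have hM' : (0 : ℤ) < M := by exact_mod_cast hM
  ext x
  simp only [Finset.mem_filter, Finset.mem_Ico]
  constructor
  · intro hx
    exact ⟨x % M, ⟨⟨Int.emod_nonneg _ hM'.ne', Int.emod_lt_of_pos _ hM'⟩,
      (hper.apply_emod x).mpr hx⟩, x / M, (Int.emod_add_mul_ediv x M).symm⟩
  · rintro ⟨c, ⟨-, hc⟩, k, rfl⟩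
    exact (mul_comm (M : ℤ) k ▸ hper.int_mul k c).mpr hc

namespace AddSubgroup

section AddGroup

variable {G : Type*} [AddGroup G] {S T : Set G}

theorem isComplement_of_existsUnique
    (h : ∀ g : G, ∃! p : G × G, p.1 ∈ S ∧ p.2 ∈ T ∧ p.1 + p.2 = g) : IsComplement S T := by
  refine ⟨fun x y hxy => ?_, fun g => ?_⟩
  · obtain ⟨p, -, hp⟩ := h (x.1 + x.2)
    have hx := hp ((x.1 : G), (x.2 : G)) ⟨x.1.2, x.2.2, rfl⟩
    have hy := hp ((y.1 : G), (y.2 : G)) ⟨y.1.2, y.2.2, hxy.symm⟩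
    have hxy' := hx.trans hy.symm
    simp only [Prod.mk.injEq] at hxy'
    exact Prod.ext (Subtype.ext hxy'.1) (Subtype.ext hxy'.2)
  · obtain ⟨p, ⟨hs, ht, hp⟩, -⟩ := h g
    exact ⟨(⟨p.1, hs⟩, ⟨p.2, ht⟩), hp⟩

theorem IsComplement.exists_add_eq (h : IsComplement S T) (g : G) :
    ∃ s ∈ S, ∃ t ∈ T, s + t = g := by
  obtain ⟨x, hx⟩ := h.2 g
  exact ⟨x.1, x.1.2, x.2, x.2.2, hx⟩

theorem IsComplement.eq_and_eq_of_add_eq (h : IsComplement S T) {s s' t t' : G}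
    (hs : s ∈ S) (hs' : s' ∈ S) (ht : t ∈ T) (ht' : t' ∈ T) (e : s + t = s' + t') :
    s = s' ∧ t = t' := by
  have := @h.1 (⟨s, hs⟩, ⟨t, ht⟩) (⟨s', hs'⟩, ⟨t', ht'⟩) e
  simp only [Prod.mk.injEq, Subtype.mk.injEq] at this
  exact this

theorem IsComplement.preimage_add_right (h : IsComplement S T) (c : G) :
    IsComplement S ((· + c) ⁻¹' T) := by
  refine ⟨fun x y hxy => ?_, fun g => ?_⟩
  · have e : (x.1 : G) + (x.2 + c) = y.1 + (y.2 + c) := by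
      simpa only [← add_assoc] using congrArg (· + c) hxy
    obtain ⟨h1, h2⟩ := h.eq_and_eq_of_add_eq x.1.2 y.1.2 x.2.2 y.2.2 e
    exact Prod.ext (Subtype.ext h1) (Subtype.ext (add_right_cancel h2))
  · obtain ⟨s, hs, t, ht, hst⟩ := h.exists_add_eq (g + c)
    refine ⟨(⟨s, hs⟩, ⟨t - c, by simpa using ht⟩), ?_⟩
    simp only [← add_sub_assoc, hst, add_sub_cancel_right]

end AddGroup

section AddCommGroup

variable {G : Type*} [AddCommGroup G] {S T T' : Set G}

/-- In `S + T'`, the point `s₀ + y` is covered either as `s₀ + y` or through one of the points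
`s₀ + y - s` with `s ≠ s₀`. -/
theorem IsComplement.mem_of_mem (hT : IsComplement S T) (hT' : IsComplement S T')
    {s₀ y : G} (hs₀ : s₀ ∈ S) (hy : y ∈ T)
    (h : ∀ s ∈ S, s ≠ s₀ → s₀ + y - s ∈ T' → s₀ + y - s ∈ T) : y ∈ T' := by
  obtain ⟨s, hs, t, ht, hst⟩ := hT'.exists_add_eq (s₀ + y)
  have ht_eq : t = s₀ + y - s := by rw [← hst]; abel
  by_cases hss₀ : s = s₀
  · rwa [ht_eq, hss₀, add_sub_cancel_left] at ht
  · refine absurd (hT.eq_and_eq_of_add_eq hs hs₀ (h s hs hss₀ (ht_eq ▸ ht)) hy ?_).1 hss₀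
    rw [← ht_eq, hst]

theorem IsComplement.mem_iff_of_forall_mem_iff (hT : IsComplement S T)
    (hT' : IsComplement S T') {s₀ y : G} (hs₀ : s₀ ∈ S)
    (h : ∀ s ∈ S, s ≠ s₀ → (s₀ + y - s ∈ T ↔ s₀ + y - s ∈ T')) : y ∈ T ↔ y ∈ T' :=
  ⟨fun hy => hT.mem_of_mem hT' hs₀ hy fun s hs hne => (h s hs hne).2,
    fun hy => hT'.mem_of_mem hT hs₀ hy fun s hs hne => (h s hs hne).1⟩

end AddCommGroup

section Int

variable {A : Finset ℤ} {B B' : Set ℤ} {D : ℕ}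

theorem IsComplement.mem_iff_of_forall_Ico (hB : IsComplement (A : Set ℤ) B)
    (hB' : IsComplement (A : Set ℤ) B') (hD : ∀ a ∈ A, ∀ a' ∈ A, a - a' ≤ D) {y : ℤ}
    (h : ∀ x ∈ Ico (y - D) y, x ∈ B ↔ x ∈ B') : y ∈ B ↔ y ∈ B' := by
  obtain ⟨a₀, ha₀, hmin⟩ := A.exists_min_image id (Finset.coe_nonempty.mp hB.nonempty_left)
  refine hB.mem_iff_of_forall_mem_iff hB' ha₀ fun a ha hne => h _ ?_
  have := hmin a ha
  have := hD a ha a₀ ha₀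
  simp only [id, Set.mem_Ico] at *
  omega

theorem IsComplement.mem_iff_of_forall_Ioc (hB : IsComplement (A : Set ℤ) B)
    (hB' : IsComplement (A : Set ℤ) B') (hD : ∀ a ∈ A, ∀ a' ∈ A, a - a' ≤ D) {y : ℤ}
    (h : ∀ x ∈ Ioc y (y + D), x ∈ B ↔ x ∈ B') : y ∈ B ↔ y ∈ B' := by
  obtain ⟨a₀, ha₀, hmax⟩ := A.exists_max_image id (Finset.coe_nonempty.mp hB.nonempty_left)
  refine hB.mem_iff_of_forall_mem_iff hB' ha₀ fun a ha hne => h _ ?_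
  have := hmax a ha
  have := hD a₀ ha₀ a ha
  simp only [id, Set.mem_Ioc] at *
  omega

theorem IsComplement.eq_of_forall_Icc (hB : IsComplement (A : Set ℤ) B)
    (hB' : IsComplement (A : Set ℤ) B') (hD : ∀ a ∈ A, ∀ a' ∈ A, a - a' ≤ D) (k₀ : ℤ)
    (h : ∀ x ∈ Icc k₀ (k₀ + D), x ∈ B ↔ x ∈ B') : B = B' := by
  have hwin : ∀ k : ℤ, ∀ x ∈ Icc k (k + D), x ∈ B ↔ x ∈ B' := by
    intro k
    induction k using Int.inductionOn' (b := k₀) with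
    | zero => exact h
    | succ k _ ih =>
      intro x hx
      by_cases hxk : x ≤ k + D
      · exact ih x ⟨by linarith [hx.1], hxk⟩
      · refine hB.mem_iff_of_forall_Ico hB' hD fun z hz => ih z ?_
        simp only [Set.mem_Icc, Set.mem_Ico] at hx hz ⊢
        omega
    | pred k _ ih =>
      intro x hx
      by_cases hxk : k ≤ x
      · exact ih x ⟨hxk, by linarith [hx.2]⟩
      · refine hB.mem_iff_of_forall_Ioc hB' hD fun z hz => ih z ?_
        simp only [Set.mem_Icc, Set.mem_Ioc] at hx hz ⊢
        omega
  ext x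
  exact hwin x x ⟨le_rfl, by omega⟩

theorem IsComplement.periodic_of_forall_add_mem_iff (hB : IsComplement (A : Set ℤ) B)
    (hD : ∀ a ∈ A, ∀ a' ∈ A, a - a' ≤ D) {k₁ k₂ : ℤ}
    (h : ∀ i : ℕ, i ≤ D → (k₁ + i ∈ B ↔ k₂ + i ∈ B)) : Periodic (· ∈ B) (k₂ - k₁) := by
  have hshift : B = (· + (k₂ - k₁)) ⁻¹' B := by
    refine hB.eq_of_forall_Icc (hB.preimage_add_right _) hD k₁ fun x hx => ?_
    have hi := h (x - k₁).toNat (by simp only [Set.mem_Icc] at hx; omega)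
    rw [Int.toNat_sub_of_le hx.1, add_sub_cancel] at hi
    rwa [Set.mem_preimage, show x + (k₂ - k₁) = k₂ + (x - k₁) by ring]
  exact fun x => propext (Set.ext_iff.mp hshift x).symm

theorem IsComplement.exists_periodic (hB : IsComplement (A : Set ℤ) B) :
    ∃ M : ℕ, 0 < M ∧ Periodic (· ∈ B) (M : ℤ) := by
  obtain ⟨D, hD⟩ : ∃ D : ℕ, ∀ a ∈ A, ∀ a' ∈ A, a - a' ≤ D := by
    obtain ⟨u, hu⟩ := A.bddAbove
    obtain ⟨l, hl⟩ := A.bddBelow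
    exact ⟨(u - l).toNat, fun a ha a' ha' => by linarith [hu ha, hl ha', Int.self_le_toNat (u - l)]⟩
  obtain ⟨k₁, k₂, hne, hpattern⟩ :=
    Finite.exists_ne_map_eq_of_infinite fun k : ℤ => fun i : Fin (D + 1) => (k + i ∈ B : Prop)
  have hper := hB.periodic_of_forall_add_mem_iff hD fun i hi =>
    (congrFun hpattern ⟨i, Nat.lt_succ_of_le hi⟩).to_iff
  exact ⟨(k₂ - k₁).natAbs, by omega, hper.natAbs⟩

theorem IsComplement.card_mul_card_filter_Ico (hB : IsComplement (A : Set ℤ) B)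
    [DecidablePred (· ∈ B)] {M : ℕ} (hM : 0 < M) (hper : Periodic (· ∈ B) (M : ℤ)) :
    A.card * ({c ∈ Finset.Ico 0 (M : ℤ) | c ∈ B}).card = M := by
  have : NeZero M := ⟨hM.ne'⟩
  rw [← Finset.card_product]
  calc _ = (Finset.univ : Finset (ZMod M)).card := Finset.card_bij
          (fun p _ => ((p.1 + p.2 : ℤ) : ZMod M)) (fun _ _ => Finset.mem_univ _) ?_ ?_
    _ = M := by rw [Finset.card_univ, ZMod.card]
  · rintro ⟨a, c⟩ hac ⟨a', c'⟩ hac' he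
    simp only [Finset.mem_product, Finset.mem_filter, Finset.mem_Ico] at hac hac'
    obtain ⟨k, hk⟩ := (ZMod.intCast_eq_intCast_iff_dvd_sub _ _ M).mp he
    have hcB : c + k * M ∈ B := (hper.int_mul k c).mpr hac.2.2
    obtain ⟨rfl, rfl⟩ := hB.eq_and_eq_of_add_eq hac.1 hac'.1 hcB hac'.2.2 (by linarith)
    have hc := Int.emod_eq_of_lt hac.2.1.1 hac.2.1.2
    have hc' := Int.emod_eq_of_lt hac'.2.1.1 hac'.2.1.2
    rw [Int.add_mul_emod_self_right] at hc'
    exact Prod.ext rfl (hc.symm.trans hc')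
  · intro z _
    obtain ⟨r, rfl⟩ := ZMod.intCast_surjective z
    obtain ⟨a, ha, b, hb, rfl⟩ := hB.exists_add_eq r
    have hM' : (0 : ℤ) < M := by exact_mod_cast hM
    refine ⟨(a, b % M), ?_, by push_cast [ZMod.intCast_mod]; rfl⟩
    simp only [Finset.mem_product, Finset.mem_filter, Finset.mem_Ico]
    exact ⟨ha, ⟨Int.emod_nonneg _ hM'.ne', Int.emod_lt_of_pos _ hM'⟩, (hper.apply_emod b).mpr hb⟩

end Int

end AddSubgroup

theorem newman_tiling_periodic_general
    (A : Finset ℤ) (B : Set ℤ)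
    (htile : ∀ n : ℤ, ∃! p : ℤ × ℤ, p.1 ∈ A ∧ p.2 ∈ B ∧ p.1 + p.2 = n) :
    ∃ (M : ℕ) (C : Finset ℤ), 0 < M ∧
      B = {x : ℤ | ∃ c ∈ C, ∃ k : ℤ, x = c + (M : ℤ) * k} ∧
      A.card * C.card = M := by
  classical
  have hB : AddSubgroup.IsComplement (A : Set ℤ) B :=
    AddSubgroup.isComplement_of_existsUnique htile
  obtain ⟨M, hM, hper⟩ := hB.exists_periodic
  exact ⟨M, _, hM, hper.eq_setOf_exists_add_mul hM, hB.card_mul_card_filter_Ico hM hper⟩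

/-- Newman's theorem: every tiling of `ℤ` by a finite set `A` is periodic: `B = C ⊕ Mℤ`
with `#A · #C = M`. -/
theorem newman_tiling_periodic
    (A : Finset ℤ) (hA : A.Nonempty) (B : Set ℤ)
    (htile : ∀ n : ℤ, ∃! p : ℤ × ℤ, p.1 ∈ A ∧ p.2 ∈ B ∧ p.1 + p.2 = n) :
    ∃ (M : ℕ) (C : Finset ℤ), 0 < M ∧
      B = {x : ℤ | ∃ c ∈ C, ∃ k : ℤ, x = c + (M : ℤ) * k} ∧
      A.card * C.card = M :=
  newman_tiling_periodic_general A B htile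
end

section
/- Let A ⊆ ℤ be a finite set that tiles ℤ by translations, with mask polynomial A(x) = ∑_{a∈A} x^a. Let S_A be the set of prime powers p^α such that the cyclotomic polynomial Φ_{p^α} divides A(x). Then A(1) = ∏_{s∈S_A} Φ_s(1), i.e., #A = ∏_{p^α ∈ S_A} p (property (T1) of Coven–Meyerowitz). -/
/-!
If `A ⊕ B = ℤ` with `A` finite, then `B` is periodic: whether `n ∈ B` is decided by `B` on the
`D = max A - min A` integers just below `n`, and also by those just above `n`, so a window of
length `D` that repeats (pigeonhole) propagates in both directions. For a period `T`, `A` and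
`B₀ = B ∩ [0, T)` are complementary modulo `T`, hence `A(x) B₀(x) ≡ 1 + x + ⋯ + x^(T-1)` modulo
`x^T - 1`, and every `Φ_s` with `1 ≠ s ∣ T`, being prime in `ℤ[X]`, divides `A(x)` or `B₀(x)`.
Evaluating at `1`, `|A| |B₀| = T = ∏ Φ_s(1)` over the prime powers `s ∣ T`; this product divides
`∏_{S_A} Φ_s(1) · ∏_{S_{B₀}} Φ_s(1)`, whose factors divide `|A|` and `|B₀|` because distinct
cyclotomic polynomials are coprime. Hence all these divisibilities are equalities.
-/

open Polynomial Finset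

theorem pow_sub_one_dvd_pow_sub_pow_mod {R : Type*} [CommRing R] (x : R) (T u : ℕ) :
    x ^ T - 1 ∣ x ^ u - x ^ (u % T) := by
  have h : x ^ u - x ^ (u % T) = x ^ (u % T) * ((x ^ T) ^ (u / T) - 1 ^ (u / T)) := by
    rw [← pow_mul, one_pow, mul_sub, mul_one, ← pow_add, Nat.mod_add_div]
  rw [h]
  exact (sub_dvd_pow_sub_pow _ _ _).mul_left _

theorem Int.eq_of_dvd_of_mul_dvd_mul {a b m n : ℤ} (ha : 0 ≤ a) (hb : 0 ≤ b) (hm : 0 < m)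
    (hn : 0 < n) (ham : a ∣ m) (hbn : b ∣ n) (h : m * n ∣ a * b) : a = m := by
  have ha' : 0 < a := ha.lt_of_ne (by rintro rfl; exact hm.ne' (zero_dvd_iff.mp ham))
  have hb' : 0 < b := hb.lt_of_ne (by rintro rfl; exact hn.ne' (zero_dvd_iff.mp hbn))
  have := Int.le_of_dvd hm ham
  have := Int.le_of_dvd hn hbn
  have := Int.le_of_dvd (mul_pos ha' hb') h
  nlinarith

theorem prod_eval_one_cyclotomic_filter_isPrimePow {n : ℕ} (hn : 0 < n) (R : Type*)
    [CommRing R] : ∏ s ∈ n.divisors with IsPrimePow s, eval 1 (cyclotomic s R) = n := by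
  have h := congrArg (eval 1) (prod_cyclotomic_eq_geom_sum hn R)
  simp only [eval_prod, eval_finsetSum, eval_pow, eval_X, one_pow, sum_const, card_range,
    nsmul_eq_mul, mul_one] at h
  have hrest : ∏ s ∈ n.divisors.erase 1 with ¬IsPrimePow s, eval 1 (cyclotomic s R) = 1 := by
    refine prod_eq_one fun s hs => eval_one_cyclotomic_not_prime_pow fun {p} hp k hpk => ?_
    simp only [mem_filter, mem_erase] at hs
    rcases k.eq_zero_or_pos with rfl | hk
    · exact hs.1.1 (by simpa using hpk.symm)
    · exact hs.2 ((isPrimePow_nat_iff _).mpr ⟨p, k, hp, hk, hpk⟩)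
  rw [← h, ← prod_filter_mul_prod_filter_not (n.divisors.erase 1) IsPrimePow, hrest, mul_one,
    filter_erase, erase_eq_of_notMem (by simp [not_isPrimePow_one])]

theorem Function.exists_periodic_of_window_determined {α : Type*} [Finite α] (f : ℤ → α)
    (D : ℕ) (hfwd : ∀ m n : ℤ, (∀ i < D, f (m + i) = f (n + i)) → f (m + D) = f (n + D))
    (hbwd : ∀ m n : ℤ, (∀ i < D, f (m + i + 1) = f (n + i + 1)) → f m = f n) :
    ∃ t : ℕ, 0 < t ∧ Periodic f t := by
  obtain ⟨j, k, hjk, hw⟩ :=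
    Finite.exists_ne_map_eq_of_infinite fun j : ℕ => fun i : Fin D => f (j + i)
  wlog hlt : j < k generalizing j k
  · exact this k j hjk.symm hw.symm (by omega)
  set t := k - j
  let P (m : ℤ) : Prop := ∀ i < D, f (m + i) = f (m + t + i)
  have base : P j := fun i hi => by
    convert congrFun hw ⟨i, hi⟩ using 3
    push_cast [t, Nat.cast_sub hlt.le]; ring
  have up (m : ℤ) (hm : P m) : P (m + 1) := by
    intro i hi
    rcases Nat.lt_or_ge (i + 1) D with h | h
    · convert hm (i + 1) h using 2 <;> push_cast <;> ring
    · convert hfwd m (m + t) hm using 2 <;> push_cast [show D = i + 1 by omega] <;> ring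
  have down (m : ℤ) (hm : P m) : P (m - 1) := by
    rintro (_ | i) hi
    · have h := hbwd (m - 1) (m - 1 + t) fun i hi => by convert hm i hi using 2 <;> ring
      simpa using h
    · convert hm i (by omega) using 2 <;> push_cast <;> ring
  have all (m : ℤ) : P m := Int.inductionOn' m j base (fun k _ => up k) (fun k _ => down k)
  refine ⟨t, by omega, fun x => ?_⟩
  convert (hfwd (x - D) (x - D + t) (all (x - D))).symm using 2 <;> ring

noncomputable def maskPolynomial (A : Finset ℕ) : ℤ[X] := ∑ a ∈ A, X ^ a

theorem eval_one_maskPolynomial (A : Finset ℕ) : (maskPolynomial A).eval 1 = #A := by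
  simp [maskPolynomial, eval_finsetSum]

theorem prod_cyclotomic_dvd_of_forall_dvd {P : ℤ[X]} {S : Finset ℕ}
    (h : ∀ s ∈ S, cyclotomic s ℤ ∣ P) : ∏ s ∈ S, cyclotomic s ℤ ∣ P := by
  have hmonic : (∏ s ∈ S, cyclotomic s ℤ).Monic :=
    monic_prod_of_monic _ _ fun s _ => cyclotomic.monic s ℤ
  rw [IsPrimitive.Int.dvd_iff_map_cast_dvd_map_cast _ _ hmonic.isPrimitive, Polynomial.map_prod]
  refine prod_dvd_of_coprime (fun i _ j _ hij => ?_) fun i hi => ?_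
  · simpa only [Function.onFun, map_cyclotomic] using cyclotomic.isCoprime_rat hij
  · simpa only [map_cyclotomic] using Polynomial.map_dvd (Int.castRingHom ℚ) (h i hi)

theorem prod_eval_one_cyclotomic_dvd_card {A : Finset ℕ} {S : Finset ℕ}
    (h : ∀ s ∈ S, cyclotomic s ℤ ∣ maskPolynomial A) :
    ∏ s ∈ S, eval 1 (cyclotomic s ℤ) ∣ #A := by
  simpa only [eval_prod, eval_one_maskPolynomial] using
    eval_dvd (x := 1) (prod_cyclotomic_dvd_of_forall_dvd h)

section ComplementMod

variable {A B : Finset ℕ} {T : ℕ}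

theorem X_pow_sub_one_dvd_maskPolynomial_mul_sub_geom_sum
    (hAB : Set.BijOn (fun p : ℕ × ℕ => (p.1 + p.2) % T) ↑(A ×ˢ B) ↑(range T)) :
    X ^ T - 1 ∣ maskPolynomial A * maskPolynomial B - ∑ i ∈ range T, X ^ i := by
  have hprod : maskPolynomial A * maskPolynomial B = ∑ p ∈ A ×ˢ B, X ^ (p.1 + p.2) := by
    simp only [maskPolynomial, sum_mul_sum, ← sum_product', pow_add]
  have hgeom : ∑ i ∈ range T, (X : ℤ[X]) ^ i = ∑ p ∈ A ×ˢ B, X ^ ((p.1 + p.2) % T) :=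
    (sum_nbij _ hAB.mapsTo hAB.injOn hAB.surjOn fun _ _ => rfl).symm
  rw [hprod, hgeom, ← sum_sub_distrib]
  exact dvd_sum fun p _ => pow_sub_one_dvd_pow_sub_pow_mod X T _

theorem cyclotomic_dvd_maskPolynomial_or_of_bijOn
    (hAB : Set.BijOn (fun p : ℕ × ℕ => (p.1 + p.2) % T) ↑(A ×ˢ B) ↑(range T))
    {s : ℕ} (hs : s ∈ T.divisors) (hs1 : s ≠ 1) :
    cyclotomic s ℤ ∣ maskPolynomial A ∨ cyclotomic s ℤ ∣ maskPolynomial B := by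
  have hT : 0 < T := Nat.pos_of_ne_zero (Nat.mem_divisors.mp hs).2
  have hgeom : cyclotomic s ℤ ∣ ∑ i ∈ range T, X ^ i :=
    prod_cyclotomic_eq_geom_sum hT ℤ ▸ dvd_prod_of_mem _ (mem_erase.mpr ⟨hs1, hs⟩)
  have hpow : cyclotomic s ℤ ∣ X ^ T - 1 :=
    prod_cyclotomic_eq_X_pow_sub_one hT ℤ ▸ dvd_prod_of_mem _ hs
  have hprime : Prime (cyclotomic s ℤ) :=
    (cyclotomic.irreducible (Nat.pos_of_mem_divisors hs)).prime
  refine hprime.dvd_or_dvd ?_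
  simpa using dvd_add (hpow.trans (X_pow_sub_one_dvd_maskPolynomial_mul_sub_geom_sum hAB)) hgeom

theorem card_eq_prod_eval_one_cyclotomic_of_bijOn (hT : 0 < T)
    (hAB : Set.BijOn (fun p : ℕ × ℕ => (p.1 + p.2) % T) ↑(A ×ˢ B) ↑(range T)) {S : Finset ℕ}
    (hS : ∀ s, s ∈ S ↔ IsPrimePow s ∧ cyclotomic s ℤ ∣ maskPolynomial A) :
    (#A : ℤ) = ∏ s ∈ S, eval 1 (cyclotomic s ℤ) := by
  classical
  set SB := {s ∈ T.divisors | IsPrimePow s ∧ cyclotomic s ℤ ∣ maskPolynomial B}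
  have hcard : #A * #B = T := by simpa using hAB.finsetCard_eq
  have hcover : {s ∈ T.divisors | IsPrimePow s} ⊆ S ∪ SB := by
    intro s hs
    rw [mem_filter] at hs
    rcases cyclotomic_dvd_maskPolynomial_or_of_bijOn hAB hs.1 hs.2.ne_one with h | h
    · exact mem_union_left _ ((hS s).mpr ⟨hs.2, h⟩)
    · exact mem_union_right _ (mem_filter.mpr ⟨hs.1, hs.2, h⟩)
  have hTdvd :
      (T : ℤ) ∣ (∏ s ∈ S, eval 1 (cyclotomic s ℤ)) * ∏ s ∈ SB, eval 1 (cyclotomic s ℤ) := by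
    rw [← prod_eval_one_cyclotomic_filter_isPrimePow hT ℤ]
    exact (prod_dvd_prod_of_subset _ _ _ hcover).trans ⟨_, prod_union_inter.symm⟩
  have hnonneg (S' : Finset ℕ) : 0 ≤ ∏ s ∈ S', eval 1 (cyclotomic s ℤ) :=
    prod_nonneg fun s _ => cyclotomic_nonneg s le_rfl
  refine (Int.eq_of_dvd_of_mul_dvd_mul (hnonneg S) (hnonneg SB) ?_ ?_
    (prod_eval_one_cyclotomic_dvd_card fun s hs => ((hS s).mp hs).2)
    (prod_eval_one_cyclotomic_dvd_card fun s hs => (mem_filter.mp hs).2.2) ?_).symm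
  · exact_mod_cast pos_of_mul_pos_left (hcard ▸ hT) (Nat.zero_le _)
  · exact_mod_cast pos_of_mul_pos_right (hcard ▸ hT) (Nat.zero_le _)
  · exact_mod_cast hcard ▸ hTdvd

end ComplementMod

def IsTiling (A : Finset ℕ) (B : Set ℤ) : Prop :=
  ∀ n : ℤ, ∃! p : ℕ × ℤ, p.1 ∈ A ∧ p.2 ∈ B ∧ (p.1 : ℤ) + p.2 = n

namespace IsTiling

variable {A : Finset ℕ} {B : Set ℤ}

theorem nonempty (h : IsTiling A B) : A.Nonempty :=
  let ⟨p, hp, _⟩ := h 0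
  ⟨p.1, hp.1⟩

theorem mem_iff (h : IsTiling A B) {c : ℕ} (hc : c ∈ A) (n : ℤ) :
    n ∈ B ↔ ∀ a ∈ A, a ≠ c → n + c - a ∉ B := by
  obtain ⟨⟨a, b⟩, ⟨ha, hb, hab⟩, huniq⟩ := h (c + n)
  constructor
  · intro hn a' ha' hac hb'
    have h1 := huniq (c, n) ⟨hc, hn, rfl⟩
    have h2 := huniq (a', n + c - a') ⟨ha', hb', by ring⟩
    exact hac (congrArg Prod.fst (h2.trans h1.symm))
  · intro hn
    have hab : (a : ℤ) + b = c + n := hab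
    obtain rfl : a = c := by_contra fun hac => hn a ha hac (by convert hb using 1; omega)
    convert hb
    omega

theorem mem_iff_mem_of_forall (h : IsTiling A B) {c : ℕ} (hc : c ∈ A) {m n : ℤ}
    (hmn : ∀ a ∈ A, a ≠ c → (m + c - a ∈ B ↔ n + c - a ∈ B)) : m ∈ B ↔ n ∈ B := by
  rw [h.mem_iff hc, h.mem_iff hc]
  exact forall₂_congr fun a ha => imp_congr_right fun hac => not_congr (hmn a ha hac)

theorem exists_periodic (h : IsTiling A B) :
    ∃ t : ℕ, 0 < t ∧ Function.Periodic (· ∈ B) (t : ℤ) := by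
  have hA := h.nonempty
  have hmin := A.min'_le
  have hmax := A.le_max'
  -- For `D = max A - min A`: with `c = min A` the offsets `c - a` in `mem_iff_mem_of_forall`
  -- lie in `[-D, -1]`, with `c = max A` in `[1, D]`.
  refine Function.exists_periodic_of_window_determined _ (A.max' hA - A.min' hA)
    (fun m n hw => ?_) (fun m n hw => ?_)
  · refine propext (h.mem_iff_mem_of_forall (A.min'_mem hA) fun a ha hac => ?_)
    have := hmin a ha
    have := hmax a ha
    convert eq_iff_iff.mp (hw (A.max' hA - a) (by omega)) using 2 <;> omega
  · refine propext (h.mem_iff_mem_of_forall (A.max'_mem hA) fun a ha hac => ?_)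
    have := hmin a ha
    have := hmax a ha
    convert eq_iff_iff.mp (hw (A.max' hA - a - 1) (by omega)) using 2 <;> omega

theorem bijOn_mod [DecidablePred (· ∈ B)] (h : IsTiling A B) {T : ℕ} (hT : 0 < T)
    (hper : Function.Periodic (· ∈ B) (T : ℤ)) :
    Set.BijOn (fun p : ℕ × ℕ => (p.1 + p.2) % T)
      ↑(A ×ˢ {b ∈ range T | ((b : ℕ) : ℤ) ∈ B}) ↑(range T) := by
  refine ⟨fun p _ => by simpa using Nat.mod_lt _ hT, ?_, ?_⟩
  · rintro ⟨a, b⟩ hab ⟨a', b'⟩ hab' hmod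
    simp only [coe_product, coe_filter, Set.mem_prod, mem_coe, mem_range,
      Set.mem_ofPred_eq] at hab hab' hmod
    obtain ⟨k, hk⟩ := (Nat.modEq_iff_dvd.mp hmod)
    have hbk : b + k * (T : ℤ) ∈ B := (hper.int_mul k b).mpr hab.2.2
    have hrep := (h ((a' : ℤ) + b')).unique (y₁ := (a, b + k * T)) (y₂ := (a', b'))
      ⟨hab.1, hbk, by push_cast at hk; linarith⟩ ⟨hab'.1, hab'.2.2, rfl⟩
    obtain rfl : a = a' := congrArg Prod.fst hrep
    have hb : b % T = b' % T := Nat.ModEq.add_left_cancel' a hmod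
    rw [Nat.mod_eq_of_lt hab.2.1, Nat.mod_eq_of_lt hab'.2.1] at hb
    rw [hb]
  · intro i hi
    simp only [coe_range, Set.mem_Iio] at hi
    obtain ⟨⟨a, b⟩, ⟨ha, hb, hab⟩, -⟩ := h i
    have hbT : 0 ≤ b % T := Int.emod_nonneg b (by omega)
    have hbT' : b % T < T := Int.emod_lt_of_pos b (by omega)
    refine ⟨(a, (b % T).toNat), ?_, ?_⟩
    · simp only [coe_product, coe_filter, Set.mem_prod, mem_coe, mem_range, Set.mem_ofPred_eq,
        Int.toNat_of_nonneg hbT]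
      refine ⟨ha, by omega, ?_⟩
      rw [Int.emod_def, mul_comm]
      exact (hper.sub_int_mul_eq (b / T)).mpr hb
    · zify
      rw [Int.toNat_of_nonneg hbT, Int.add_emod_emod, hab]
      exact Int.emod_eq_of_lt (by omega) (by omega)

end IsTiling

theorem coven_meyerowitz_T1_general
    (A : Finset ℕ) (B : Set ℤ)
    (htile : ∀ n : ℤ, ∃! p : ℕ × ℤ, p.1 ∈ A ∧ p.2 ∈ B ∧ (p.1 : ℤ) + p.2 = n)
    (P : ℤ[X]) (hP : P = ∑ a ∈ A, X ^ a)
    (S : Finset ℕ) (hS : ∀ s : ℕ, s ∈ S ↔ IsPrimePow s ∧ cyclotomic s ℤ ∣ P) :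
    (A.card : ℤ) = ∏ s ∈ S, (cyclotomic s ℤ).eval 1 := by
  classical
  subst hP
  have htile : IsTiling A B := htile
  obtain ⟨T, hT, hper⟩ := htile.exists_periodic
  exact card_eq_prod_eval_one_cyclotomic_of_bijOn hT (htile.bijOn_mod hT hper) hS

/-- Coven–Meyerowitz (T) ⟹ (T1): if a finite `A ⊆ ℕ` tiles `ℤ` by translations, with mask
polynomial `A(x) = ∑_{a∈A} x^a`, and `S_A` is the set of prime powers `p^α` with
`Φ_{p^α} ∣ A(x)`, then `A(1) = #A = ∏_{s ∈ S_A} Φ_s(1)`. -/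
theorem coven_meyerowitz_T1
    (A : Finset ℕ) (hA : A.Nonempty) (B : Set ℤ)
    (htile : ∀ n : ℤ, ∃! p : ℕ × ℤ, p.1 ∈ A ∧ p.2 ∈ B ∧ (p.1 : ℤ) + p.2 = n)
    (P : ℤ[X]) (hP : P = ∑ a ∈ A, X ^ a)
    (S : Finset ℕ) (hS : ∀ s : ℕ, s ∈ S ↔ IsPrimePow s ∧ cyclotomic s ℤ ∣ P) :
    (A.card : ℤ) = ∏ s ∈ S, (cyclotomic s ℤ).eval 1 :=
  coven_meyerowitz_T1_general A B htile P hP S hS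
end

section
/- Let N ∈ ℕ, N ≥ 1, and let A, B ⊆ ℤ/Nℤ with A ⊕ B = ℤ/Nℤ (every element of ℤ/Nℤ is uniquely a + b, a ∈ A, b ∈ B). If #A is a prime power p^k, then A is a spectral set in ℤ/Nℤ: there exists Λ ⊆ ℤ/Nℤ with #Λ = #A such that the characters χ_λ(a) = e^{2πiλa/N}, λ ∈ Λ, restricted to A form an orthogonal basis of functions on A. -/
/-!
For the mask polynomials `A(X) = ∑_{a ∈ A} X^a`, the tiling `A ⊕ B = ℤ/Nℤ` means
`A(X) B(X) ≡ 1 + X + ⋯ + X^(N-1) mod X^N - 1`, so each cyclotomic polynomial `Φ_{p^α}` with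
`1 ≤ α ≤ v_p(N)` divides `A(X)` or `B(X)`. Evaluating at `1`, `B(X)` can absorb at most
`v_p(N) - k` of them since `#A * #B = N`, so `A(X)` is divisible by `Φ_{p^α}` for at least `k`
exponents `α₁ < ⋯ < α_k`. With `g_i` of order `p^(α_i)`, the `p^k` sums `∑ c_i g_i`, `0 ≤ c_i < p`,
are pairwise distinct and each of their differences has order `p^(α_i)`, `i` the largest index
where the coefficients differ. Its character value is then a root of `Φ_{p^(α_i)}`, hence of
`A(X)`, and the orthogonality sum is the value of `A(X)` there.
-/

open Complex Polynomial Finset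

section Factorization

variable {G : Type*} [Add G]

def IsAddFactorization (A B : Finset G) : Prop :=
  ∀ g : G, ∃! q : G × G, q.1 ∈ A ∧ q.2 ∈ B ∧ q.1 + q.2 = g

variable [Fintype G] {A B : Finset G}

theorem IsAddFactorization.sum_sum_add {M : Type*} [AddCommMonoid M]
    (h : IsAddFactorization A B) (f : G → M) :
    ∑ a ∈ A, ∑ b ∈ B, f (a + b) = ∑ g, f g := by
  rw [← sum_product']
  refine sum_bij (fun q _ => q.1 + q.2) (fun _ _ => mem_univ _) ?_ ?_ (fun _ _ => rfl)
  · intro q₁ hq₁ q₂ hq₂ heq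
    rw [mem_product] at hq₁ hq₂
    exact (h _).unique ⟨hq₁.1, hq₁.2, rfl⟩ ⟨hq₂.1, hq₂.2, heq.symm⟩
  · intro g _
    obtain ⟨q, ⟨hq₁, hq₂, rfl⟩, -⟩ := h g
    exact ⟨q, mem_product.mpr ⟨hq₁, hq₂⟩, rfl⟩

theorem IsAddFactorization.card_mul_card (h : IsAddFactorization A B) :
    #A * #B = Fintype.card G := by
  simpa only [sum_const, smul_eq_mul, mul_one, card_univ] using h.sum_sum_add fun _ => (1 : ℕ)

end Factorization

theorem Polynomial.prime_cyclotomic {n : ℕ} (hn : 0 < n) : Prime (cyclotomic n ℤ) :=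
  (cyclotomic.irreducible hn).prime

theorem Polynomial.prod_cyclotomic_dvd {s : Finset ℕ} (hs : ∀ n ∈ s, 0 < n) {f : ℤ[X]}
    (hf : ∀ n ∈ s, cyclotomic n ℤ ∣ f) : ∏ n ∈ s, cyclotomic n ℤ ∣ f := by
  classical
  induction s using Finset.induction_on generalizing f with
  | empty => simp
  | @insert m s hm ih =>
    have hprime := prime_cyclotomic (hs m (mem_insert_self m s))
    obtain ⟨g, rfl⟩ := hf m (mem_insert_self m s)
    rw [prod_insert hm]
    refine mul_dvd_mul_left _ (ih (fun n hn => hs n (mem_insert_of_mem hn)) fun n hn => ?_)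
    have hnprime := prime_cyclotomic (hs n (mem_insert_of_mem hn))
    refine (hnprime.dvd_or_dvd (hf n (mem_insert_of_mem hn))).resolve_left fun hdvd => ?_
    have hassoc := hnprime.associated_of_dvd hprime hdvd
    have hnm : n = m := cyclotomic_injective (eq_of_monic_of_associated
      (cyclotomic.monic _ ℤ) (cyclotomic.monic _ ℤ) hassoc)
    exact hm (hnm ▸ hn)

theorem Polynomial.pow_card_dvd_eval_one {p : ℕ} (hp : p.Prime) {s : Finset ℕ}
    (hs : ∀ α ∈ s, 0 < α) {f : ℤ[X]} (hf : ∀ α ∈ s, cyclotomic (p ^ α) ℤ ∣ f) :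
    (p : ℤ) ^ #s ∣ f.eval 1 := by
  have := Fact.mk hp
  have hinj : Set.InjOn (p ^ ·) (s : Set ℕ) :=
    (Nat.pow_right_injective hp.two_le).injOn
  obtain ⟨g, hg⟩ := prod_cyclotomic_dvd (s := s.image (p ^ ·))
    (by simpa using fun α _ => pow_pos hp.pos α) (by simpa using hf)
  rw [hg, eval_mul, prod_image hinj, eval_prod]
  refine Dvd.dvd.mul_right (dvd_of_eq ?_) _
  rw [← prod_const]
  refine prod_congr rfl fun α hα => ?_
  obtain ⟨β, rfl⟩ := Nat.exists_eq_add_of_lt (hs α hα)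
  simp [eval_one_cyclotomic_prime_pow]

theorem Polynomial.X_pow_sub_one_dvd_X_pow_sub_X_pow_mod {R : Type*} [CommRing R] (N m : ℕ) :
    (X ^ N - 1 : R[X]) ∣ X ^ m - X ^ (m % N) := by
  have h : (X ^ m - X ^ (m % N) : R[X]) = X ^ (m % N) * ((X ^ N) ^ (m / N) - 1 ^ (m / N)) := by
    rw [one_pow, mul_sub, mul_one, ← pow_mul, ← pow_add, Nat.mod_add_div]
  rw [h]
  exact (sub_dvd_pow_sub_pow _ _ _).mul_left _

section PrimePowerOrders

variable {G : Type*} [AddCommGroup G] {p : ℕ}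

theorem addOrderOf_add_nsmul_eq (hp : p.Prime) {x y : G} {α β m : ℕ}
    (hx : addOrderOf x = p ^ β) (hy : addOrderOf y = p ^ α) (hβα : β < α) (hm : ¬p ∣ m) :
    addOrderOf (x + m • y) = p ^ α := by
  have hmy : addOrderOf (m • y) = p ^ α := by
    rw [← hy]
    exact Nat.Coprime.addOrderOf_nsmul (hy ▸ ((hp.coprime_iff_not_dvd.mpr hm).pow_left α))
  rw [← hmy]
  refine (AddCommute.all _ _).addOrderOf_add_eq_right_of_forall_prime_mul_dvd
    (addOrderOf_pos_iff.mp (hmy ▸ pow_pos hp.pos α)) fun q hq hqx => ?_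
  rw [hx] at hqx ⊢
  obtain rfl := (Nat.prime_dvd_prime_iff_eq hq hp).mp (hq.dvd_of_dvd_pow hqx)
  rw [hmy, ← pow_succ']
  exact pow_dvd_pow q hβα

theorem exists_addOrderOf_add_nsmul_sub_eq (hp : p.Prime) {T : Finset ℕ} {Λ : Finset G}
    (hΛ : ∀ l ∈ Λ, ∀ l' ∈ Λ, l ≠ l' → ∃ α ∈ T, addOrderOf (l - l') = p ^ α)
    {α₀ : ℕ} (hα₀ : 0 < α₀) (hmax : ∀ α ∈ T, α < α₀) {g : G} (hg : addOrderOf g = p ^ α₀)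
    {l₁ l₂ : G} (hl₁ : l₁ ∈ Λ) (hl₂ : l₂ ∈ Λ) {c₁ c₂ : ℕ} (hc₁ : c₁ < p) (hc₂ : c₂ < p)
    (hne : (l₁, c₁) ≠ (l₂, c₂)) :
    ∃ α ∈ insert α₀ T, addOrderOf (l₁ + c₁ • g - (l₂ + c₂ • g)) = p ^ α := by
  wlog hc : c₂ ≤ c₁ generalizing l₁ l₂ c₁ c₂
  · obtain ⟨α, hα, h⟩ := this hl₂ hl₁ hc₂ hc₁ hne.symm (by omega)
    exact ⟨α, hα, by rwa [← neg_sub, addOrderOf_neg]⟩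
  have hsub_eq : l₁ + c₁ • g - (l₂ + c₂ • g) = (l₁ - l₂) + (c₁ - c₂) • g := by
    rw [← Nat.sub_add_cancel hc, add_nsmul, Nat.add_sub_cancel]
    abel
  rcases hc.eq_or_lt with rfl | hc
  · obtain ⟨α, hα, h⟩ := hΛ l₁ hl₁ l₂ hl₂ fun hl => hne (by rw [hl])
    exact ⟨α, mem_insert_of_mem hα, by rwa [hsub_eq, Nat.sub_self, zero_nsmul, add_zero]⟩
  obtain ⟨β, hβα₀, hβ⟩ : ∃ β < α₀, addOrderOf (l₁ - l₂) = p ^ β := by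
    by_cases hl : l₁ = l₂
    · exact ⟨0, hα₀, by simp [hl]⟩
    · obtain ⟨β, hβ, h⟩ := hΛ l₁ hl₁ l₂ hl₂ hl
      exact ⟨β, hmax β hβ, h⟩
  refine ⟨α₀, mem_insert_self α₀ T, ?_⟩
  rw [hsub_eq]
  exact addOrderOf_add_nsmul_eq hp hβ hg hβα₀
    (Nat.not_dvd_of_pos_of_lt (Nat.sub_pos_of_lt hc) (by omega))

theorem exists_finset_addOrderOf_sub_eq_prime_pow (hp : p.Prime) (T : Finset ℕ)
    (hT : ∀ α ∈ T, 0 < α ∧ ∃ g : G, addOrderOf g = p ^ α) :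
    ∃ Λ : Finset G, #Λ = p ^ #T ∧
      ∀ l ∈ Λ, ∀ l' ∈ Λ, l ≠ l' → ∃ α ∈ T, addOrderOf (l - l') = p ^ α := by
  classical
  induction T using Finset.induction_on_max with
  | empty => exact ⟨{0}, by simp, by simp⟩
  | insert α₀ T hmax ih =>
    obtain ⟨Λ, hcard, hΛ⟩ := ih fun α hα => hT α (mem_insert_of_mem hα)
    obtain ⟨hα₀, g, hg⟩ := hT α₀ (mem_insert_self α₀ T)
    set f : G × ℕ → G := fun q => q.1 + q.2 • g
    have hinj : Set.InjOn f (Λ ×ˢ range p : Finset _) := by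
      rintro ⟨l₁, c₁⟩ h₁ ⟨l₂, c₂⟩ h₂ heq
      simp only [coe_product, Set.mem_prod, mem_coe, mem_range] at h₁ h₂
      by_contra hne
      obtain ⟨α, hα, h⟩ :=
        exists_addOrderOf_add_nsmul_sub_eq hp hΛ hα₀ hmax hg h₁.1 h₂.1 h₁.2 h₂.2 hne
      rw [show l₁ + c₁ • g = l₂ + c₂ • g from heq, sub_self, addOrderOf_zero] at h
      exact (Nat.one_lt_pow (hT α hα).1.ne' hp.one_lt).ne' h.symm
    refine ⟨(Λ ×ˢ range p).image f, ?_, ?_⟩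
    · rw [card_image_of_injOn hinj, card_product, card_range, hcard,
        card_insert_of_notMem fun h => (hmax α₀ h).false, pow_succ]
    · simp only [mem_image, mem_product, mem_range]
      rintro _ ⟨⟨l₁, c₁⟩, ⟨hl₁, hc₁⟩, rfl⟩ _ ⟨⟨l₂, c₂⟩, ⟨hl₂, hc₂⟩, rfl⟩ hne
      exact exists_addOrderOf_add_nsmul_sub_eq hp hΛ hα₀ hmax hg hl₁ hl₂ hc₁ hc₂
        fun h => hne (by rw [h])

end PrimePowerOrders

namespace ZMod

variable {N : ℕ}

noncomputable def maskPoly (A : Finset (ZMod N)) : ℤ[X] := ∑ a ∈ A, X ^ a.val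

theorem eval_one_maskPoly (A : Finset (ZMod N)) : (maskPoly A).eval 1 = #A := by
  simp [maskPoly, eval_finsetSum]

variable [NeZero N]

theorem sum_val_eq_sum_range {M : Type*} [AddCommMonoid M] (f : ℕ → M) :
    ∑ g : ZMod N, f g.val = ∑ i ∈ range N, f i := by
  refine sum_nbij ZMod.val (fun g _ => mem_range.mpr g.val_lt)
    (fun g₁ _ g₂ _ h => ZMod.val_injective N h) ?_ (fun _ _ => rfl)
  intro i hi
  exact ⟨i, mem_univ _, ZMod.val_cast_of_lt (mem_range.mp hi)⟩

theorem X_pow_sub_one_dvd_maskPoly_mul_sub {A B : Finset (ZMod N)}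
    (h : IsAddFactorization A B) :
    (X ^ N - 1 : ℤ[X]) ∣ maskPoly A * maskPoly B - ∑ i ∈ range N, X ^ i := by
  have hAB : maskPoly A * maskPoly B = ∑ a ∈ A, ∑ b ∈ B, (X : ℤ[X]) ^ (a.val + b.val) := by
    simp only [maskPoly, sum_mul_sum, pow_add]
  rw [hAB, ← sum_val_eq_sum_range, ← h.sum_sum_add (fun g => (X : ℤ[X]) ^ g.val)]
  simp only [← sum_sub_distrib, ZMod.val_add]
  exact dvd_sum fun a _ => dvd_sum fun b _ => X_pow_sub_one_dvd_X_pow_sub_X_pow_mod N _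

theorem cyclotomic_dvd_maskPoly_mul {A B : Finset (ZMod N)} (h : IsAddFactorization A B)
    {d : ℕ} (hdN : d ∣ N) (hd : d ≠ 1) : cyclotomic d ℤ ∣ maskPoly A * maskPoly B := by
  have hX : cyclotomic d ℤ ∣ (X ^ N - 1 : ℤ[X]) := by
    rw [← prod_cyclotomic_eq_X_pow_sub_one (Nat.pos_of_neZero N)]
    exact dvd_prod_of_mem _ (Nat.mem_divisors.mpr ⟨hdN, NeZero.ne N⟩)
  simpa using dvd_add ((hX.trans (X_pow_sub_one_dvd_maskPoly_mul_sub h)))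
    (cyclotomic_dvd_geom_sum_of_dvd ℤ hdN hd)

theorem exists_card_eq_cyclotomic_dvd_maskPoly {A B : Finset (ZMod N)}
    (h : IsAddFactorization A B) {p k : ℕ} (hp : p.Prime) (hA : #A = p ^ k) :
    ∃ T : Finset ℕ, #T = k ∧
      ∀ α ∈ T, 0 < α ∧ p ^ α ∣ N ∧ cyclotomic (p ^ α) ℤ ∣ maskPoly A := by
  classical
  set v := N.factorization p
  have hpos : ∀ α ∈ Icc 1 v, 0 < α := fun α hα => (mem_Icc.mp hα).1
  set SB := {α ∈ Icc 1 v | ¬cyclotomic (p ^ α) ℤ ∣ maskPoly A}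
  have hB : ∀ α ∈ SB, cyclotomic (p ^ α) ℤ ∣ maskPoly B := by
    intro α hα
    obtain ⟨hαv, hαA⟩ := mem_filter.mp hα
    have hdvd : p ^ α ∣ N := (pow_dvd_pow p (mem_Icc.mp hαv).2).trans (Nat.ordProj_dvd N p)
    have hne : p ^ α ≠ 1 := (Nat.one_lt_pow (hpos α hαv).ne' hp.one_lt).ne'
    exact ((prime_cyclotomic (pow_pos hp.pos α)).dvd_or_dvd
      (cyclotomic_dvd_maskPoly_mul h hdvd hne)).resolve_left hαA
  have hpB := pow_card_dvd_eval_one hp (fun α hα => hpos α (mem_filter.mp hα).1) hB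
  rw [eval_one_maskPoly] at hpB
  have hpN : p ^ (k + #SB) ∣ N := by
    have hN : #A * #B = N := by rw [h.card_mul_card, ZMod.card]
    rw [pow_add, ← hA]
    exact (mul_dvd_mul_left #A (by exact_mod_cast hpB)).trans (dvd_of_eq hN)
  have hle := (hp.pow_dvd_iff_le_factorization (NeZero.ne N)).mp hpN
  have hsplit : #{α ∈ Icc 1 v | cyclotomic (p ^ α) ℤ ∣ maskPoly A} + #SB = v := by
    rw [card_filter_add_card_filter_not, Nat.card_Icc, Nat.add_sub_cancel]
  obtain ⟨T, hT, hTk⟩ := exists_subset_card_eq (show k ≤ #{α ∈ Icc 1 v |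
    cyclotomic (p ^ α) ℤ ∣ maskPoly A} by omega)
  refine ⟨T, hTk, fun α hα => ?_⟩
  obtain ⟨hαv, hαA⟩ := mem_filter.mp (hT hα)
  exact ⟨hpos α hαv, (pow_dvd_pow p (mem_Icc.mp hαv).2).trans (Nat.ordProj_dvd N p), hαA⟩

theorem exists_addOrderOf_eq {d : ℕ} (hd : d ∣ N) : ∃ g : ZMod N, addOrderOf g = d := by
  refine ⟨(N / d : ℕ), ?_⟩
  rw [addOrderOf_coe _ (NeZero.ne N), Nat.gcd_eq_right (Nat.div_dvd_of_dvd hd),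
    Nat.div_div_self hd (NeZero.ne N)]

theorem isPrimitiveRoot_stdAddChar (x : ZMod N) :
    IsPrimitiveRoot (stdAddChar x) (addOrderOf x) := by
  have h := orderOf_injective stdAddChar.toMonoidHom injective_stdAddChar (Multiplicative.ofAdd x)
  rw [orderOf_ofAdd_eq_addOrderOf] at h
  exact h ▸ IsPrimitiveRoot.orderOf _

theorem stdAddChar_mul (x a : ZMod N) : stdAddChar (x * a) = stdAddChar x ^ a.val := by
  rw [← AddChar.map_nsmul_eq_pow, nsmul_eq_mul, mul_comm, natCast_zmod_val]

theorem sum_stdAddChar_mul_eq_zero {x : ZMod N} {A : Finset (ZMod N)}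
    (h : cyclotomic (addOrderOf x) ℤ ∣ maskPoly A) : ∑ a ∈ A, stdAddChar (x * a) = 0 := by
  obtain ⟨f, hf⟩ := h
  have hA : aeval (stdAddChar x) (maskPoly A) = ∑ a ∈ A, stdAddChar x ^ a.val := by
    simp [maskPoly]
  have hroot : aeval (stdAddChar x) (cyclotomic (addOrderOf x) ℤ) = 0 := by
    rw [aeval_def, eval₂_eq_eval_map, map_cyclotomic]
    exact (isPrimitiveRoot_stdAddChar x).isRoot_cyclotomic (addOrderOf_pos x)
  simp only [stdAddChar_mul, ← hA, hf, map_mul, hroot, zero_mul]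

end ZMod

/-- If `A ⊕ B = ℤ/Nℤ` and `#A` is a prime power, then `A` is spectral in `ℤ/Nℤ`:
there is `Λ ⊆ ℤ/Nℤ`, `#Λ = #A`, whose characters restricted to `A` are pairwise
orthogonal. -/
theorem prime_power_tile_is_spectral
    (N : ℕ) (hN : 1 ≤ N) (A B : Finset (ZMod N))
    (hfac : ∀ g : ZMod N, ∃! p : ZMod N × ZMod N, p.1 ∈ A ∧ p.2 ∈ B ∧ p.1 + p.2 = g)
    (p k : ℕ) (hp : p.Prime) (hcard : A.card = p ^ k) :
    ∃ Λ : Finset (ZMod N), Λ.card = A.card ∧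
      ∀ lam ∈ Λ, ∀ lam' ∈ Λ, lam ≠ lam' →
        ∑ a ∈ A, Complex.exp (2 * Real.pi * I * (((lam - lam') * a).val : ℕ) / N) = 0 := by
  have : NeZero N := ⟨by omega⟩
  obtain ⟨T, hTk, hT⟩ := ZMod.exists_card_eq_cyclotomic_dvd_maskPoly hfac hp hcard
  obtain ⟨Λ, hΛcard, hΛ⟩ := exists_finset_addOrderOf_sub_eq_prime_pow hp T
    fun α hα => ⟨(hT α hα).1, ZMod.exists_addOrderOf_eq (hT α hα).2.1⟩
  refine ⟨Λ, by rw [hΛcard, hTk, hcard], fun lam hlam lam' hlam' hne => ?_⟩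
  obtain ⟨α, hα, hord⟩ := hΛ lam hlam lam' hlam' hne
  simp_rw [← ZMod.toCircle_apply, ← ZMod.stdAddChar_apply]
  exact ZMod.sum_stdAddChar_mul_eq_zero (hord ▸ (hT α hα).2.2)
end

section
/- Suppose R is an expansive integer n×n matrix and B ⊆ ℤⁿ satisfies (B - B) ∩ Rℤⁿ = {0} (no two distinct elements of B are congruent mod R). Then for distinct b, b' ∈ B, the sets τ_b(X_B) and τ_{b'}(X_B) of the attractor X_B = ⋃_{c∈B} τ_c(X_B), with τ_c(x) = R⁻¹(x+c), satisfy μ_B(τ_b(X_B) ∩ τ_{b'}(X_B)) = 0, where μ_B is the equal-weight invariant measure — i.e., the IFS has no essential overlap. -/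
/-!
Pulling back through the maps `τ_d` with the invariance of `μ` gives
`μ(τ_b X ∩ τ_{b'} X) = #B⁻¹ ∑_d μ((X + b - d) ∩ (X + b' - d))`, and in each term `d ≠ b` or
`d ≠ b'`, so it suffices that `μ(X + (p - q)) = 0` for digits `p ≠ q`.

Consider the level-`n` cells `R⁻ⁿ(X + c)`, with `c` running over the expansions
`D_n = {∑_{k<n} R^k b_k : b_k ∈ B}`. As the digits are incongruent mod `R`, the elements of `D_n`
are pairwise incongruent mod `Rⁿ`; in particular they are distinct integers, so a point lies in
boundedly many cells and the total mass `m_n = ∑_{c ∈ D_n} μ(R⁻ⁿ(X + c))` stays bounded. On the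
other hand, invariance gives `μ(τ_p C) ≥ #B⁻¹ (μ C + μ(C + (p - q)))` and `μ(τ_b C) ≥ #B⁻¹ μ C`,
so summing over the cells of level `n + 1` yields `m_{n+1} ≥ m_n + #B⁻¹ μ(X + (p - q))`.
Hence `μ(X + (p - q)) = 0`.
-/

open MeasureTheory Finset
open scoped ENNReal

theorem eq_inv_card_smul_sum_map_of_integral_eq {ι Ω : Type*} [MeasurableSpace Ω]
    [TopologicalSpace Ω] [HasOuterApproxClosed Ω] [BorelSpace Ω] {s : Finset ι}
    (hs : s.Nonempty) {f : ι → Ω → Ω} (hf : ∀ i, Continuous (f i)) {μ : Measure Ω}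
    [IsFiniteMeasure μ]
    (h : ∀ g : Ω → ℝ, Continuous g →
      ∫ x, g x ∂μ = (1 / #s : ℝ) * ∑ i ∈ s, ∫ x, g (f i x) ∂μ) :
    μ = (#s : ℝ≥0∞)⁻¹ • ∑ i ∈ s, μ.map (f i) := by
  refine ext_of_forall_lintegral_eq_of_IsFiniteMeasure fun g => ?_
  have hcomp : ∀ i, ∫⁻ x, g (f i x) ∂μ = ENNReal.ofReal (∫ x, (g (f i x) : ℝ) ∂μ) := fun i =>
    lintegral_coe_eq_integral _ ((g.compContinuous ⟨f i, hf i⟩).integrable_of_nnreal μ)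
  rw [lintegral_smul_measure, lintegral_finsetSum_measure,
    lintegral_coe_eq_integral _ (g.integrable_of_nnreal μ), h _ (by fun_prop),
    ENNReal.ofReal_mul (by positivity),
    ENNReal.ofReal_sum_of_nonneg fun i _ => integral_nonneg fun x => (g _).coe_nonneg,
    one_div, ENNReal.ofReal_inv_of_pos (by exact_mod_cast hs.card_pos), ENNReal.ofReal_natCast]
  congr 1
  refine sum_congr rfl fun i _ => ?_
  rw [lintegral_map g.continuous.measurable.coe_nnreal_ennreal (hf i).measurable, hcomp]

theorem measure_eq_inv_card_mul_sum_preimage {ι Ω : Type*} [MeasurableSpace Ω] {s : Finset ι}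
    {f : ι → Ω → Ω} (hf : ∀ i, Measurable (f i)) {μ : Measure Ω}
    (hμ : μ = (#s : ℝ≥0∞)⁻¹ • ∑ i ∈ s, μ.map (f i)) {E : Set Ω} (hE : MeasurableSet E) :
    μ E = (#s : ℝ≥0∞)⁻¹ * ∑ i ∈ s, μ (f i ⁻¹' E) := by
  conv_lhs => rw [hμ]
  rw [Measure.smul_apply, Measure.finsetSum_apply, smul_eq_mul]
  exact congrArg _ (sum_congr rfl fun i _ => Measure.map_apply (hf i) hE)

theorem sum_diag_add_le_sum_sum {ι M : Type*} [AddCommMonoid M] [PartialOrder M]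
    [CanonicallyOrderedAdd M] [IsOrderedAddMonoid M] {s : Finset ι} (f : ι → ι → M) {p q : ι}
    (hp : p ∈ s) (hq : q ∈ s) (hpq : p ≠ q) :
    ∑ i ∈ s, f i i + f p q ≤ ∑ i ∈ s, ∑ j ∈ s, f i j := by
  classical
  have hsub : insert (p, q) (s.image fun i => (i, i)) ⊆ s ×ˢ s := by
    simp [hp, hq, subset_iff]
  have hpq' : (p, q) ∉ s.image fun i => (i, i) := by simp [hpq.symm]
  rw [← sum_product' s s f, add_comm]
  calc f p q + ∑ i ∈ s, f i i
      = ∑ x ∈ insert (p, q) (s.image fun i => (i, i)), f x.1 x.2 := by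
        rw [sum_insert hpq', sum_image fun i _ j _ h => (Prod.ext_iff.mp h).1]
    _ ≤ ∑ x ∈ s ×ˢ s, f x.1 x.2 := sum_le_sum_of_subset hsub

open scoped Classical in
theorem sum_measure_le_of_card_filter_mem_le {α ι : Type*} [MeasurableSpace α] (μ : Measure α)
    {s : Finset ι} {A : ι → Set α} (hA : ∀ i ∈ s, MeasurableSet (A i)) {K : ℕ}
    (hK : ∀ x, #{i ∈ s | x ∈ A i} ≤ K) :
    ∑ i ∈ s, μ (A i) ≤ K * μ Set.univ := by
  have hcount : ∀ x, ∑ i ∈ s, (A i).indicator 1 x = (#{i ∈ s | x ∈ A i} : ℝ≥0∞) := fun x => by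
    simp only [Set.indicator_apply, Pi.one_apply, sum_boole]
  calc ∑ i ∈ s, μ (A i) = ∫⁻ x, ∑ i ∈ s, (A i).indicator 1 x ∂μ := by
        rw [lintegral_finsetSum _ fun i hi => measurable_one.indicator (hA i hi)]
        exact sum_congr rfl fun i hi => (lintegral_indicator_one (hA i hi)).symm
    _ ≤ ∫⁻ _, (K : ℝ≥0∞) ∂μ :=
        lintegral_mono fun x => by rw [hcount]; exact Nat.cast_le.mpr (hK x)
    _ = K * μ Set.univ := lintegral_const _

open scoped Classical in
theorem card_filter_sub_mem_le {X : Set ℝ} {M : ℝ} (hX : ∀ x ∈ X, |x| ≤ M) (D : Finset ℤ)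
    (y : ℝ) : #(D.filter fun c : ℤ => y - c ∈ X) ≤ ⌈2 * M⌉₊ + 1 := by
  set a : ℤ := ⌈y - M⌉
  have hsub : D.filter (fun c : ℤ => y - c ∈ X) ⊆ Ico a (a + ((⌈2 * M⌉₊ + 1 : ℕ) : ℤ)) :=
      fun c hc => by
    have hyc := abs_le.mp (hX _ (mem_filter.mp hc).2)
    have ha : y - M ≤ a := Int.le_ceil _
    have hM : 2 * M ≤ ⌈2 * M⌉₊ := Nat.le_ceil _
    rw [mem_Ico, Int.ceil_le, ← Int.cast_lt (R := ℝ)]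
    push_cast
    constructor <;> linarith
  simpa using card_le_card hsub

noncomputable def digitMap (s c x : ℝ) : ℝ := (x + c) / s

@[fun_prop]
theorem continuous_digitMap (s c : ℝ) : Continuous (digitMap s c) := by
  unfold digitMap; fun_prop

section digitMap

variable {s t : ℝ}

theorem image_digitMap (hs : s ≠ 0) (c : ℝ) (E : Set ℝ) :
    digitMap s c '' E = (fun y => s * y - c) ⁻¹' E := by
  ext y
  refine ⟨?_, fun hy => ⟨s * y - c, hy, ?_⟩⟩
  · rintro ⟨x, hx, rfl⟩
    simpa [digitMap, mul_div_cancel₀ _ hs] using hx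
  · simp [digitMap, mul_div_cancel_left₀ _ hs]

theorem MeasurableSet.image_digitMap {E : Set ℝ} (hE : MeasurableSet E) (hs : s ≠ 0) (c : ℝ) :
    MeasurableSet (digitMap s c '' E) := by
  rw [_root_.image_digitMap hs]
  exact hE.preimage (by fun_prop)

theorem preimage_digitMap_image_digitMap (hs : s ≠ 0) (b d : ℝ) (E : Set ℝ) :
    digitMap s d ⁻¹' (digitMap s b '' E) = (· + (b - d)) '' E := by
  rw [image_digitMap hs, Set.image_add_right]
  ext x
  simp only [Set.mem_preimage, digitMap, mul_div_cancel₀ _ hs]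
  ring_nf

theorem digitMap_comp_digitMap (ht : t ≠ 0) (s b c : ℝ) :
    digitMap s b ∘ digitMap t c = digitMap (t * s) (c + b * t) := by
  ext x
  simp only [Function.comp_apply, digitMap]
  field_simp
  ring

theorem sum_measure_image_digitMap_le (μ : Measure ℝ) {X : Set ℝ} (hXm : MeasurableSet X)
    {M : ℝ} (hM : ∀ x ∈ X, |x| ≤ M) (hs : s ≠ 0) (D : Finset ℤ) :
    ∑ c ∈ D, μ (digitMap s c '' X) ≤ (⌈2 * M⌉₊ + 1 : ℕ) * μ Set.univ :=
  sum_measure_le_of_card_filter_mem_le μ (A := fun c : ℤ => digitMap s c '' X)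
    (fun c _ => hXm.image_digitMap hs c) fun x => by
    convert card_filter_sub_mem_le hM D (s * x) using 3
    rw [image_digitMap hs, Set.mem_preimage]

end digitMap

def digitSet (R : ℤ) (B : Finset ℤ) : ℕ → Finset ℤ
  | 0 => {0}
  | n + 1 => (digitSet R B n ×ˢ B).image fun cb => cb.1 + R ^ n * cb.2

section digitSet

variable {R : ℤ} {B : Finset ℤ}

theorem eq_and_eq_of_pow_succ_dvd (hR : R ≠ 0) {n : ℕ} {D : Finset ℤ}
    (hD : ∀ c ∈ D, ∀ c' ∈ D, R ^ n ∣ c - c' → c = c')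
    (hB : ∀ b ∈ B, ∀ b' ∈ B, R ∣ b - b' → b = b') {c c' b b' : ℤ} (hc : c ∈ D) (hc' : c' ∈ D)
    (hb : b ∈ B) (hb' : b' ∈ B) (h : R ^ (n + 1) ∣ c + R ^ n * b - (c' + R ^ n * b')) :
    c = c' ∧ b = b' := by
  have hlow : R ^ n ∣ c - c' := by
    have := (pow_dvd_pow R n.le_succ).trans h
    rwa [show c + R ^ n * b - (c' + R ^ n * b') = c - c' + R ^ n * (b - b') by ring,
      dvd_add_left (dvd_mul_right _ _)] at this
  obtain rfl := hD c hc c' hc' hlow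
  rw [show c + R ^ n * b - (c + R ^ n * b') = R ^ n * (b - b') by ring, pow_succ,
    mul_dvd_mul_iff_left (pow_ne_zero n hR)] at h
  exact ⟨rfl, hB b hb b' hb' h⟩

theorem eq_of_mem_digitSet_of_dvd (hR : R ≠ 0) (hB : ∀ b ∈ B, ∀ b' ∈ B, R ∣ b - b' → b = b') :
    ∀ n, ∀ c ∈ digitSet R B n, ∀ c' ∈ digitSet R B n, R ^ n ∣ c - c' → c = c'
  | 0, c, hc, c', hc', _ => by simp_all [digitSet]
  | n + 1, _, hc, _, hc', h => by
    simp only [digitSet, mem_image, mem_product] at hc hc'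
    obtain ⟨⟨c, b⟩, ⟨hc, hb⟩, rfl⟩ := hc
    obtain ⟨⟨c', b'⟩, ⟨hc', hb'⟩, rfl⟩ := hc'
    obtain ⟨rfl, rfl⟩ :=
      eq_and_eq_of_pow_succ_dvd hR (eq_of_mem_digitSet_of_dvd hR hB n) hB hc hc' hb hb' h
    rfl

theorem sum_digitSet_succ {M : Type*} [AddCommMonoid M] (hR : R ≠ 0)
    (hB : ∀ b ∈ B, ∀ b' ∈ B, R ∣ b - b' → b = b') (n : ℕ) (f : ℤ → M) :
    ∑ c ∈ digitSet R B (n + 1), f c = ∑ c ∈ digitSet R B n, ∑ b ∈ B, f (c + R ^ n * b) := by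
  rw [digitSet, sum_image, sum_product]
  rintro ⟨c, b⟩ hcb ⟨c', b'⟩ hcb' h
  simp only [coe_product, Set.mem_prod, mem_coe] at hcb hcb' h
  obtain ⟨rfl, rfl⟩ := eq_and_eq_of_pow_succ_dvd hR (eq_of_mem_digitSet_of_dvd hR hB n) hB
    hcb.1 hcb'.1 hcb.2 hcb'.2 (by rw [h, sub_self]; exact dvd_zero _)
  rfl

theorem image_digitMap_image_digitMap (hR : R ≠ 0) (n : ℕ) (c b : ℤ) (X : Set ℝ) :
    digitMap R b '' (digitMap ((R : ℝ) ^ n) c '' X)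
      = digitMap ((R : ℝ) ^ (n + 1)) ((c + R ^ n * b : ℤ) : ℝ) '' X := by
  rw [Set.image_image, ← Function.comp_def,
    digitMap_comp_digitMap (pow_ne_zero n (Int.cast_ne_zero.mpr hR))]
  push_cast
  ring_nf

theorem iUnion_image_digitMap_digitSet (hR : R ≠ 0) {X : Set ℝ}
    (hX : X = ⋃ b ∈ B, digitMap R b '' X) :
    ∀ n, ⋃ c ∈ digitSet R B n, digitMap ((R : ℝ) ^ n) c '' X = X
  | 0 => by simp [digitSet, show digitMap 1 0 = id from funext fun x => by simp [digitMap]]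
  | n + 1 => by
    conv_rhs => rw [hX, ← iUnion_image_digitMap_digitSet hR hX n]
    simp only [digitSet, set_biUnion_finset_image, Set.image_iUnion₂,
      image_digitMap_image_digitMap hR]
    ext x
    simp only [Set.mem_iUnion, mem_product, Prod.exists, exists_prop]
    tauto

end digitSet

section selfSimilar

variable {R : ℤ} {B : Finset ℤ} {μ : Measure ℝ}

theorem measure_image_digitMap_eq (hR : R ≠ 0)
    (hμ : μ = (#B : ℝ≥0∞)⁻¹ • ∑ d ∈ B, μ.map (digitMap R d)) {E : Set ℝ}
    (hE : MeasurableSet E) (b : ℤ) :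
    μ (digitMap R b '' E) = (#B : ℝ≥0∞)⁻¹ * ∑ d ∈ B, μ ((· + ((b : ℝ) - d)) '' E) := by
  have hR' : (R : ℝ) ≠ 0 := Int.cast_ne_zero.mpr hR
  rw [measure_eq_inv_card_mul_sum_preimage (fun d => (continuous_digitMap _ _).measurable) hμ
    (hE.image_digitMap hR' b)]
  simp only [preimage_digitMap_image_digitMap hR']

theorem measure_add_inv_card_mul_le_sum (hR : R ≠ 0)
    (hμ : μ = (#B : ℝ≥0∞)⁻¹ • ∑ d ∈ B, μ.map (digitMap R d)) {p q : ℤ} (hp : p ∈ B)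
    (hq : q ∈ B) (hpq : p ≠ q) {E : Set ℝ} (hE : MeasurableSet E) :
    μ E + (#B : ℝ≥0∞)⁻¹ * μ ((· + ((p : ℝ) - q)) '' E) ≤ ∑ b ∈ B, μ (digitMap R b '' E) := by
  have hdiag : ∑ b ∈ B, μ ((· + ((b : ℝ) - b)) '' E) = #B * μ E := by simp
  rw [sum_congr rfl fun b _ => measure_image_digitMap_eq hR hμ hE b, ← mul_sum]
  calc μ E + (#B : ℝ≥0∞)⁻¹ * μ ((· + ((p : ℝ) - q)) '' E)
      = (#B : ℝ≥0∞)⁻¹ *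
          (∑ b ∈ B, μ ((· + ((b : ℝ) - b)) '' E) + μ ((· + ((p : ℝ) - q)) '' E)) := by
        rw [hdiag, mul_add, ← mul_assoc,
          ENNReal.inv_mul_cancel (by simpa using ne_empty_of_mem hp) (ENNReal.natCast_ne_top _),
          one_mul]
    _ ≤ _ := by
        gcongr
        exact sum_diag_add_le_sum_sum (fun b d : ℤ => μ ((· + ((b : ℝ) - d)) '' E)) hp hq hpq

theorem sum_measure_image_digitMap_add_le_succ (hR : R ≠ 0)
    (hB : ∀ b ∈ B, ∀ b' ∈ B, R ∣ b - b' → b = b')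
    {X : Set ℝ} (hXm : MeasurableSet X) (hX : X = ⋃ b ∈ B, digitMap R b '' X)
    (hμ : μ = (#B : ℝ≥0∞)⁻¹ • ∑ d ∈ B, μ.map (digitMap R d)) {p q : ℤ} (hp : p ∈ B)
    (hq : q ∈ B) (hpq : p ≠ q) (n : ℕ) :
    ∑ c ∈ digitSet R B n, μ (digitMap ((R : ℝ) ^ n) c '' X)
        + (#B : ℝ≥0∞)⁻¹ * μ ((· + ((p : ℝ) - q)) '' X)
      ≤ ∑ c ∈ digitSet R B (n + 1), μ (digitMap ((R : ℝ) ^ (n + 1)) c '' X) := by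
  have hcell : ∀ c : ℤ, MeasurableSet (digitMap ((R : ℝ) ^ n) c '' X) := fun c =>
    hXm.image_digitMap (pow_ne_zero n (Int.cast_ne_zero.mpr hR)) c
  have hcover : μ ((· + ((p : ℝ) - q)) '' X)
      ≤ ∑ c ∈ digitSet R B n, μ ((· + ((p : ℝ) - q)) '' (digitMap ((R : ℝ) ^ n) c '' X)) := by
    conv_lhs => rw [← iUnion_image_digitMap_digitSet hR hX n, Set.image_iUnion₂]
    exact measure_biUnion_finset_le _ _
  rw [sum_digitSet_succ hR hB]
  simp only [← image_digitMap_image_digitMap hR]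
  calc _ ≤ ∑ c ∈ digitSet R B n, (μ (digitMap ((R : ℝ) ^ n) c '' X) + (#B : ℝ≥0∞)⁻¹ *
          μ ((· + ((p : ℝ) - q)) '' (digitMap ((R : ℝ) ^ n) c '' X))) := by
        rw [sum_add_distrib, ← mul_sum]
        gcongr
    _ ≤ _ := sum_le_sum fun c _ => measure_add_inv_card_mul_le_sum hR hμ hp hq hpq (hcell c)

theorem measure_image_add_sub_eq_zero [IsFiniteMeasure μ] (hR : R ≠ 0)
    (hB : ∀ b ∈ B, ∀ b' ∈ B, R ∣ b - b' → b = b') {X : Set ℝ} (hXc : IsCompact X)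
    (hX : X = ⋃ b ∈ B, digitMap R b '' X)
    (hμ : μ = (#B : ℝ≥0∞)⁻¹ • ∑ d ∈ B, μ.map (digitMap R d)) {p q : ℤ} (hp : p ∈ B)
    (hq : q ∈ B) (hpq : p ≠ q) :
    μ ((· + ((p : ℝ) - q)) '' X) = 0 := by
  obtain ⟨M, hM⟩ := isBounded_iff_forall_norm_le.mp hXc.isBounded
  set δ := (#B : ℝ≥0∞)⁻¹ * μ ((· + ((p : ℝ) - q)) '' X) with hδ_def
  set m : ℕ → ℝ≥0∞ := fun n => ∑ c ∈ digitSet R B n, μ (digitMap ((R : ℝ) ^ n) c '' X)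
  have hgrowth : ∀ n : ℕ, n * δ ≤ m n := by
    intro n
    induction n with
    | zero => simp
    | succ n ih =>
      calc ((n + 1 : ℕ) : ℝ≥0∞) * δ = n * δ + δ := by push_cast; ring
        _ ≤ m n + δ := by gcongr
        _ ≤ m (n + 1) :=
          sum_measure_image_digitMap_add_le_succ hR hB hXc.measurableSet hX hμ hp hq hpq n
  have hbound : ∀ n, m n ≤ (⌈2 * M⌉₊ + 1 : ℕ) * μ Set.univ := fun n =>
    sum_measure_image_digitMap_le μ hXc.measurableSet hM
      (pow_ne_zero n (Int.cast_ne_zero.mpr hR)) _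
  have hδ : δ = 0 := by
    by_contra hδ
    obtain ⟨n, hn⟩ := ENNReal.exists_nat_mul_gt hδ
      (ENNReal.mul_ne_top (ENNReal.natCast_ne_top _) (measure_ne_top μ _))
    exact (hn.trans_le (hgrowth n)).not_ge (hbound n)
  simpa [hδ_def] using hδ

end selfSimilar

theorem ifs_no_essential_overlap_general
    (R : ℤ) (hR : 2 ≤ |R|) (B : Finset ℤ)
    (hB : ∀ b ∈ B, ∀ b' ∈ B, R ∣ (b - b') → b = b')
    (τ : ℤ → ℝ → ℝ) (hτ : ∀ b x, τ b x = (x + b) / R)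
    (X : Set ℝ) (hXcpt : IsCompact X)
    (hX : X = ⋃ b ∈ B, (τ b) '' X)
    (μ : Measure ℝ) [IsProbabilityMeasure μ]
    (hμ : ∀ f : ℝ → ℝ, Continuous f →
      ∫ x, f x ∂μ = (1 / B.card : ℝ) * ∑ b ∈ B, ∫ x, f (τ b x) ∂μ) :
    ∀ b ∈ B, ∀ b' ∈ B, b ≠ b' → μ ((τ b '' X) ∩ (τ b' '' X)) = 0 := by
  intro b hb b' hb' hbb'
  have hR0 : R ≠ 0 := by rintro rfl; simp at hR
  have hτ' : ∀ b, τ b = digitMap R b := fun b => funext (hτ b)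
  simp only [hτ'] at hX hμ ⊢
  have hinv := eq_inv_card_smul_sum_map_of_integral_eq ⟨b, hb⟩
    (fun d => continuous_digitMap _ _) hμ
  have hnull : ∀ {p q : ℤ}, p ∈ B → q ∈ B → p ≠ q → μ ((· + ((p : ℝ) - q)) '' X) = 0 :=
    measure_image_add_sub_eq_zero hR0 hB hXcpt hX hinv
  have hpiece : ∀ c : ℤ, MeasurableSet (digitMap R c '' X) := fun c =>
    hXcpt.measurableSet.image_digitMap (Int.cast_ne_zero.mpr hR0) c
  rw [measure_eq_inv_card_mul_sum_preimage (fun d => (continuous_digitMap _ _).measurable) hinv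
    ((hpiece b).inter (hpiece b'))]
  refine mul_eq_zero_of_right _ (sum_eq_zero fun d hd => ?_)
  simp only [Set.preimage_inter, preimage_digitMap_image_digitMap (Int.cast_ne_zero.mpr hR0)]
  rcases eq_or_ne d b' with rfl | hdb'
  · exact measure_mono_null Set.inter_subset_left (hnull hb hd hbb')
  · exact measure_mono_null Set.inter_subset_right (hnull hb' hd hdb'.symm)

/-- No essential overlap (dimension 1): if `R ∈ ℤ`, `|R| ≥ 2`, and the digits in `B` are
pairwise incongruent mod `R`, then the pieces `τ_b(X_B)` of the attractor are
`μ_B`-essentially disjoint. -/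
theorem ifs_no_essential_overlap
    (R : ℤ) (hR : 2 ≤ |R|) (B : Finset ℤ)
    (hB : ∀ b ∈ B, ∀ b' ∈ B, R ∣ (b - b') → b = b')
    (τ : ℤ → ℝ → ℝ) (hτ : ∀ b x, τ b x = (x + b) / R)
    (X : Set ℝ) (hXne : X.Nonempty) (hXcpt : IsCompact X)
    (hX : X = ⋃ b ∈ B, (τ b) '' X)
    (μ : Measure ℝ) [IsProbabilityMeasure μ]
    (hμ : ∀ f : ℝ → ℝ, Continuous f →
      ∫ x, f x ∂μ = (1 / B.card : ℝ) * ∑ b ∈ B, ∫ x, f (τ b x) ∂μ) :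
    ∀ b ∈ B, ∀ b' ∈ B, b ≠ b' → μ ((τ b '' X) ∩ (τ b' '' X)) = 0 :=
  ifs_no_essential_overlap_general R hR B hB τ hτ X hXcpt hX μ hμ
end

section
/- Let μ and ν be Borel probability measures on ℝᵈ forming a spectral pair in the Jorgensen–Pedersen sense: the map F: f ↦ (y ↦ ∫ e^{-ix·y} f(x) dμ(x)) is an isometry from L²(μ) onto L²(ν). Then (ν, μ) is also a spectral pair, i.e., the map g ↦ (x ↦ ∫ e^{-ix·y} g(y) dν(y)) is (up to complex conjugation/reflection) an isometry from L²(ν) onto L²(μ); precisely, the adjoint F* of the unitary F is given by F*g(x) = ∫ e^{ix·y} g(y) dν(y), and g ↦ F*ḡ conjugated appropriately realizes (ν,μ) as a spectral pair. -/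
open MeasureTheory Complex

open scoped ComplexConjugate InnerProductSpace

/-!
Let `T` be the transform with kernel `K x y = e^{-i x·y}` from `μ` to `ν`, and `S` the transform
with the conjugate kernel back from `ν` to `μ`; by Fubini, `S` is the formal adjoint of `T`.
An isometry with a formal adjoint is left-inverted by it: for `h = S (T f)` one has
`⟪h, f⟫ = ‖T f‖² = ‖f‖²` and, by Cauchy–Schwarz, `‖h‖² = ⟪T f, T h⟫ ≤ ‖f‖ ‖h‖`, so `‖h - f‖² ≤ 0`.
The transform with kernel `K` from `ν` to `μ` is `g ↦ conj (S (conj g))`. Writing `conj g = T f`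
by surjectivity of `T` shows that it maps `g` to `conj f`, hence is isometric; and
`f = conj (S (T (conj f)))` shows that it is onto.
-/

theorem leftInverse_of_inner_adjoint_of_norm_map {𝕜 E F : Type*} [RCLike 𝕜]
    [NormedAddCommGroup E] [InnerProductSpace 𝕜 E] [NormedAddCommGroup F] [InnerProductSpace 𝕜 F]
    {A : E → F} {B : F → E} (hadj : ∀ v u, ⟪B v, u⟫_𝕜 = ⟪v, A u⟫_𝕜)
    (hA : ∀ u, ‖A u‖ = ‖u‖) : Function.LeftInverse B A := by
  intro u
  set h := B (A u)
  have h_inner : RCLike.re ⟪h, u⟫_𝕜 = ‖u‖ ^ 2 := by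
    rw [hadj, ← norm_sq_eq_re_inner, hA]
  have h_norm : ‖h‖ ^ 2 ≤ ‖u‖ * ‖h‖ :=
    calc ‖h‖ ^ 2 = RCLike.re ⟪A u, A h⟫_𝕜 := by rw [← hadj, ← norm_sq_eq_re_inner]
      _ ≤ ‖A u‖ * ‖A h‖ := re_inner_le_norm _ _
      _ = ‖u‖ * ‖h‖ := by rw [hA, hA]
  have h_sub : ‖h - u‖ ^ 2 ≤ 0 := by
    rw [norm_sub_sq (𝕜 := 𝕜), h_inner]
    nlinarith [norm_nonneg h, norm_nonneg u]
  exact sub_eq_zero.mp <| norm_eq_zero.mp <|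
    (pow_eq_zero_iff two_ne_zero).mp (le_antisymm h_sub (sq_nonneg _))

section L2

variable {α : Type*} [MeasurableSpace α] {μ : Measure α}

theorem MeasureTheory.MemLp.inner_toLp {f g : α → ℂ} (hf : MemLp f 2 μ) (hg : MemLp g 2 μ) :
    ⟪hf.toLp f, hg.toLp g⟫_ℂ = ∫ x, conj (f x) * g x ∂μ := by
  refine integral_congr_ae ?_
  filter_upwards [hf.coeFn_toLp, hg.coeFn_toLp] with x hfx hgx
  rw [hfx, hgx, RCLike.inner_apply, mul_comm]

theorem MeasureTheory.MemLp.norm_toLp_sq {f : α → ℂ} (hf : MemLp f 2 μ) :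
    ‖hf.toLp f‖ ^ 2 = ∫ x, ‖f x‖ ^ 2 ∂μ := by
  rw [← inner_self_eq_norm_sq (𝕜 := ℂ), hf.inner_toLp hf]
  simp_rw [conj_mul', ← ofReal_pow]
  rw [integral_complex_ofReal]
  exact ofReal_re _

end L2

section KernelTransform

variable {α β : Type*}

def adjointKernel (K : α → β → ℂ) : β → α → ℂ := fun y x => conj (K x y)

theorem norm_adjointKernel (K : α → β → ℂ) (y : β) (x : α) : ‖adjointKernel K y x‖ = ‖K x y‖ :=
  RCLike.norm_conj _

variable {mα : MeasurableSpace α} {mβ : MeasurableSpace β}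

noncomputable def kernelTransform (K : α → β → ℂ) (μ : Measure α) (f : α → ℂ) (y : β) : ℂ :=
  ∫ x, K x y * f x ∂μ

def IsL2Isometry (T : (α → ℂ) → β → ℂ) (μ : Measure α) (ν : Measure β) : Prop :=
  ∀ f, MemLp f 2 μ → MemLp (T f) 2 ν ∧ ∫ y, ‖T f y‖ ^ 2 ∂ν = ∫ x, ‖f x‖ ^ 2 ∂μ

variable {μ : Measure α} {ν : Measure β} {K : α → β → ℂ} {C : ℝ}

theorem kernelTransform_congr_ae {f g : α → ℂ} (h : f =ᵐ[μ] g) :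
    kernelTransform K μ f = kernelTransform K μ g :=
  funext fun _ => integral_congr_ae (h.mono fun x hx => by simp only [hx])

theorem measurable_uncurry_adjointKernel (hK : Measurable (Function.uncurry K)) :
    Measurable (Function.uncurry (adjointKernel K)) :=
  Complex.continuous_conj.measurable.comp (hK.comp measurable_swap)

theorem conj_kernelTransform_adjointKernel (g : β → ℂ) (x : α) :
    conj (kernelTransform (adjointKernel K) ν (fun y => conj (g y)) x) =
      kernelTransform (flip K) ν g x := by
  simp only [kernelTransform, adjointKernel, ← integral_conj, map_mul, conj_conj, flip]

theorem memLp_kernelTransform [SFinite μ] [IsFiniteMeasure ν] (hK : Measurable (Function.uncurry K))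
    (hKC : ∀ x y, ‖K x y‖ ≤ C) {f : α → ℂ} (hf : Integrable f μ) (p : ENNReal) :
    MemLp (kernelTransform K μ f) p ν := by
  refine MemLp.of_bound ?_ (C * ∫ x, ‖f x‖ ∂μ) (Filter.Eventually.of_forall fun y => ?_)
  · exact (hK.comp measurable_swap).aestronglyMeasurable.mul hf.1.comp_snd
      |>.integral_prod_right' (μ := ν) (ν := μ)
  calc ‖kernelTransform K μ f y‖ ≤ ∫ x, ‖K x y * f x‖ ∂μ := norm_integral_le_integral_norm _
    _ ≤ ∫ x, C * ‖f x‖ ∂μ := by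
      refine integral_mono_of_nonneg (.of_forall fun x => norm_nonneg _) (hf.norm.const_mul C)
        (.of_forall fun x => ?_)
      simp only [norm_mul]
      exact mul_le_mul_of_nonneg_right (hKC x y) (norm_nonneg _)
    _ = C * ∫ x, ‖f x‖ ∂μ := integral_const_mul _ _

theorem integral_conj_kernelTransform_adjointKernel_mul [SFinite μ] [SFinite ν]
    (hK : Measurable (Function.uncurry K)) (hKC : ∀ x y, ‖K x y‖ ≤ C) {f : α → ℂ} {g : β → ℂ}
    (hf : Integrable f μ) (hg : Integrable g ν) :
    ∫ x, conj (kernelTransform (adjointKernel K) ν g x) * f x ∂μ =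
      ∫ y, conj (g y) * kernelTransform K μ f y ∂ν := by
  have hg_conj : Integrable (fun y => conj (g y)) ν :=
    memLp_one_iff_integrable.1 (memLp_one_iff_integrable.2 hg).star
  have h_prod : Integrable (Function.uncurry fun x y => K x y * conj (g y) * f x) (μ.prod ν) := by
    refine ((hf.mul_prod hg_conj).bdd_mul hK.aestronglyMeasurable
      (.of_forall fun z => hKC z.1 z.2)).congr (.of_forall fun z => ?_)
    simp only [Function.uncurry]
    ring
  calc ∫ x, conj (kernelTransform (adjointKernel K) ν g x) * f x ∂μ
      = ∫ x, ∫ y, K x y * conj (g y) * f x ∂ν ∂μ := by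
        simp only [kernelTransform, adjointKernel, ← integral_conj, map_mul, conj_conj,
          integral_mul_const]
    _ = ∫ y, ∫ x, K x y * conj (g y) * f x ∂μ ∂ν := integral_integral_swap h_prod
    _ = ∫ y, conj (g y) * kernelTransform K μ f y ∂ν := by
        simp only [kernelTransform, ← integral_const_mul]
        congr with y
        congr with x
        ring

theorem kernelTransform_adjointKernel_kernelTransform_ae_eq [IsFiniteMeasure μ]
    [IsFiniteMeasure ν] (hK : Measurable (Function.uncurry K)) (hKC : ∀ x y, ‖K x y‖ ≤ C)
    (hiso : IsL2Isometry (kernelTransform K μ) μ ν) {f : α → ℂ} (hf : MemLp f 2 μ) :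
    kernelTransform (adjointKernel K) ν (kernelTransform K μ f) =ᵐ[μ] f := by
  set T := kernelTransform K μ
  set S := kernelTransform (adjointKernel K) ν
  have hS : ∀ g, Integrable g ν → MemLp (S g) 2 μ := fun g hg =>
    memLp_kernelTransform (measurable_uncurry_adjointKernel hK)
      (fun y x => (norm_adjointKernel K y x).trans_le (hKC x y)) hg 2
  let A : Lp ℂ 2 μ → Lp ℂ 2 ν := fun u => (hiso u (Lp.memLp u)).1.toLp (T u)
  let B : Lp ℂ 2 ν → Lp ℂ 2 μ := fun v => (hS v ((Lp.memLp v).integrable one_le_two)).toLp (S v)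
  have hadj : ∀ v u, ⟪B v, u⟫_ℂ = ⟪v, A u⟫_ℂ := by
    intro v u
    conv_lhs => rw [← Lp.toLp_coeFn u (Lp.memLp u)]
    conv_rhs => rw [← Lp.toLp_coeFn v (Lp.memLp v)]
    rw [MemLp.inner_toLp, MemLp.inner_toLp]
    exact integral_conj_kernelTransform_adjointKernel_mul hK hKC
      ((Lp.memLp u).integrable one_le_two) ((Lp.memLp v).integrable one_le_two)
  have hA : ∀ u, ‖A u‖ = ‖u‖ := by
    intro u
    have h : ‖A u‖ ^ 2 = ‖u‖ ^ 2 :=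
      calc ‖A u‖ ^ 2 = ∫ y, ‖T u y‖ ^ 2 ∂ν := MemLp.norm_toLp_sq _
        _ = ∫ x, ‖u x‖ ^ 2 ∂μ := (hiso u (Lp.memLp u)).2
        _ = ‖u‖ ^ 2 := by rw [← (Lp.memLp u).norm_toLp_sq, Lp.toLp_coeFn]
    exact (pow_left_inj₀ (norm_nonneg _) (norm_nonneg _) two_ne_zero).1 h
  have hBA := leftInverse_of_inner_adjoint_of_norm_map hadj hA (hf.toLp f)
  have hSA : S (A (hf.toLp f)) = S (T f) :=
    (kernelTransform_congr_ae (MemLp.coeFn_toLp _)).trans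
      (congrArg S (kernelTransform_congr_ae hf.coeFn_toLp))
  calc S (T f) = S (A (hf.toLp f)) := hSA.symm
    _ =ᵐ[μ] B (A (hf.toLp f)) := (MemLp.coeFn_toLp _).symm
    _ = hf.toLp f := by rw [hBA]
    _ =ᵐ[μ] f := hf.coeFn_toLp

theorem isL2Isometry_kernelTransform_flip [IsFiniteMeasure μ] [IsFiniteMeasure ν]
    (hK : Measurable (Function.uncurry K)) (hKC : ∀ x y, ‖K x y‖ ≤ C)
    (hiso : IsL2Isometry (kernelTransform K μ) μ ν)
    (hsurj : ∀ g, MemLp g 2 ν → ∃ f, MemLp f 2 μ ∧ g =ᵐ[ν] kernelTransform K μ f) :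
    IsL2Isometry (kernelTransform (flip K) ν) ν μ := by
  intro g hg
  obtain ⟨f, hf, hgf⟩ := hsurj (fun y => conj (g y)) hg.star
  have hG : kernelTransform (flip K) ν g =ᵐ[μ] fun x => conj (f x) := by
    filter_upwards [kernelTransform_adjointKernel_kernelTransform_ae_eq hK hKC hiso hf] with x hx
    rw [← conj_kernelTransform_adjointKernel, kernelTransform_congr_ae hgf, hx]
  refine ⟨(memLp_congr_ae hG).2 hf.star, ?_⟩
  calc ∫ x, ‖kernelTransform (flip K) ν g x‖ ^ 2 ∂μ = ∫ x, ‖f x‖ ^ 2 ∂μ :=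
        integral_congr_ae (hG.mono fun x hx => by simp only [hx, RCLike.norm_conj])
    _ = ∫ y, ‖kernelTransform K μ f y‖ ^ 2 ∂ν := (hiso f hf).2.symm
    _ = ∫ y, ‖g y‖ ^ 2 ∂ν :=
        integral_congr_ae (hgf.mono fun y hy => by simp only [← hy, RCLike.norm_conj])

theorem exists_ae_eq_kernelTransform_flip [IsFiniteMeasure μ] [IsFiniteMeasure ν]
    (hK : Measurable (Function.uncurry K)) (hKC : ∀ x y, ‖K x y‖ ≤ C)
    (hiso : IsL2Isometry (kernelTransform K μ) μ ν) {f : α → ℂ} (hf : MemLp f 2 μ) :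
    ∃ g, MemLp g 2 ν ∧ f =ᵐ[μ] kernelTransform (flip K) ν g := by
  have hf_conj : MemLp (fun x => conj (f x)) 2 μ := hf.star
  refine ⟨fun y => conj (kernelTransform K μ (fun x => conj (f x)) y), (hiso _ hf_conj).1.star, ?_⟩
  filter_upwards [kernelTransform_adjointKernel_kernelTransform_ae_eq hK hKC hiso hf_conj]
    with x hx
  rw [← conj_kernelTransform_adjointKernel]
  simp only [conj_conj, hx]

end KernelTransform

/-- Jorgensen–Pedersen spectral-pair duality: if `(μ,ν)` is a spectral pair — the transform
`f ↦ (y ↦ ∫ e^{-ix·y} f(x) dμ)` is an `L²`-isometry of `L²(μ)` onto `L²(ν)` — then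
`(ν,μ)` is a spectral pair as well, via `g ↦ (x ↦ ∫ e^{-ix·y} g(y) dν)`. -/
theorem spectral_pair_symmetric
    (d : ℕ) (μ ν : Measure (Fin d → ℝ)) [IsProbabilityMeasure μ] [IsProbabilityMeasure ν]
    (F : ((Fin d → ℝ) → ℂ) → ((Fin d → ℝ) → ℂ))
    (hF : ∀ f y, F f y = ∫ x, Complex.exp (-(I * (∑ i, x i * y i))) * f x ∂μ)
    (G : ((Fin d → ℝ) → ℂ) → ((Fin d → ℝ) → ℂ))
    (hG : ∀ g x, G g x = ∫ y, Complex.exp (-(I * (∑ i, x i * y i))) * g y ∂ν)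
    (hFiso : ∀ f : (Fin d → ℝ) → ℂ, MemLp f 2 μ →
      MemLp (F f) 2 ν ∧ ∫ y, ‖F f y‖ ^ 2 ∂ν = ∫ x, ‖f x‖ ^ 2 ∂μ)
    (hFsurj : ∀ g : (Fin d → ℝ) → ℂ, MemLp g 2 ν →
      ∃ f : (Fin d → ℝ) → ℂ, MemLp f 2 μ ∧ g =ᵐ[ν] F f) :
    (∀ g : (Fin d → ℝ) → ℂ, MemLp g 2 ν →
      MemLp (G g) 2 μ ∧ ∫ x, ‖G g x‖ ^ 2 ∂μ = ∫ y, ‖g y‖ ^ 2 ∂ν) ∧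
    (∀ f : (Fin d → ℝ) → ℂ, MemLp f 2 μ →
      ∃ g : (Fin d → ℝ) → ℂ, MemLp g 2 ν ∧ f =ᵐ[μ] G g) := by
  set K : (Fin d → ℝ) → (Fin d → ℝ) → ℂ := fun x y => Complex.exp (-(I * (∑ i, x i * y i)))
  have hK : Measurable (Function.uncurry K) := by fun_prop
  have hK1 : ∀ x y, ‖K x y‖ ≤ 1 := fun x y => by simp [K, Complex.norm_exp]
  obtain rfl : F = kernelTransform K μ := funext fun f => funext (hF f)
  obtain rfl : G = kernelTransform (flip K) ν := funext fun g => funext (hG g)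
  exact ⟨isL2Isometry_kernelTransform_flip hK hK1 hFiso hFsurj,
    fun f hf => exists_ae_eq_kernelTransform_flip hK hK1 hFiso hf⟩
end
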